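/- arXiv:2410.20994 — 2 statements merged into one kernel-verified Lean document; each statement's English description precedes it below -/
import Mathlib

section
/- Let Ω_0 ⊂ (0,1) be an interval, (Ω, F, P) = (Ω_0^ℕ, E^ℕ, P) with E the Borel σ-algebra on Ω_0, σ : Ω → Ω the shift map, and γ ∈ Ω_0. Assume: (B1) there exists a probability measure P̄ on Ω such that for every bounded measurable g : Ω → ℝ, lim_{n→∞} ∫_Ω n^{-1} Σ_{k=0}^{n-1} g∘σ^k dP = ∫_Ω g dP̄; (B2) the strong mixing coefficients α(n) = sup_{i≥1} sup{|P(A ∩ B) − P(A)P(B)| : A ∈ F_1^i, B ∈ F_{i+n}^∞} satisfy α(n) = O(log^{-β}(n)) for some β > 1, where F_1^i is the σ-algebra generated by the coordinate projections π_1, …, π_i and F_j^∞ is the σ-algebra generated by π_j, π_{j+1}, …; and (B3) P̄(ω_1 ≤ γ) > 0. Then there exists b > 0 (namely b = P̄(ω_1 ≤ γ)) such that for P-almost every ω ∈ Ω, lim_{n→∞} n^{-1} Σ_{k=0}^{n} 1_{[0,γ]}(ω_k) = b. -/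
open MeasureTheory Set Filter
open scoped NNReal ENNReal

set_option maxHeartbeats 1000000

noncomputable section

/-- The left shift on sequences. -/
def shift (ω : ℕ → ℝ) : ℕ → ℝ := fun n => ω (n + 1)

/-- The σ-algebra generated by the first `i` coordinates (paper's `F_1^i`, `i ≥ 1`). -/
def headSigma (i : ℕ) : MeasurableSpace (ℕ → ℝ) :=
  MeasurableSpace.comap (fun ω (j : Fin i) => ω j) inferInstance

/-- The σ-algebra generated by the coordinates from position `j` on
(paper's `F_{j+1}^∞` in 1-based notation). -/
def tailSigma (j : ℕ) : MeasurableSpace (ℕ → ℝ) :=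
  MeasurableSpace.comap (fun ω (i : ℕ) => ω (j + i)) inferInstance

/-- The strong mixing coefficients `α(n) = sup_{i ≥ 1} α(F_1^i, F_{i+n}^∞)`. -/
def alphaMix (P : Measure (ℕ → ℝ)) (n : ℕ) : ℝ :=
  ⨆ i : ℕ, sSup {c : ℝ | ∃ A B : Set (ℕ → ℝ),
    MeasurableSet[headSigma (i + 1)] A ∧ MeasurableSet[tailSigma (i + n)] B ∧
    c = |(P (A ∩ B)).toReal - (P A).toReal * (P B).toReal|}


/-! ### Auxiliary lemmas -/

lemma shift_iterate (k n : ℕ) (ω : ℕ → ℝ) : shift^[k] ω n = ω (n + k) := by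
  induction k generalizing ω with
  | zero => simp
  | succ k ih =>
      rw [Function.iterate_succ_apply, ih]
      simp only [shift]
      ring_nf

lemma ptoReal_le_one (P : Measure (ℕ → ℝ)) [IsProbabilityMeasure P] (s : Set (ℕ → ℝ)) :
    (P s).toReal ≤ 1 := by
  have h := prob_le_one (μ := P) (s := s)
  simpa using ENNReal.toReal_mono ENNReal.one_ne_top h

lemma alphaMix_set_le_one (P : Measure (ℕ → ℝ)) [IsProbabilityMeasure P] (i n : ℕ) :
    ∀ c ∈ {c : ℝ | ∃ A B : Set (ℕ → ℝ),
      MeasurableSet[headSigma (i + 1)] A ∧ MeasurableSet[tailSigma (i + n)] B ∧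
      c = |(P (A ∩ B)).toReal - (P A).toReal * (P B).toReal|}, c ≤ 1 := by
  rintro c ⟨A, B, -, -, rfl⟩
  have h1 : (P (A ∩ B)).toReal ≤ 1 := ptoReal_le_one P _
  have h2 : (P A).toReal ≤ 1 := ptoReal_le_one P _
  have h3 : (P B).toReal ≤ 1 := ptoReal_le_one P _
  have h4 : 0 ≤ (P (A ∩ B)).toReal := ENNReal.toReal_nonneg
  have h5 : 0 ≤ (P A).toReal := ENNReal.toReal_nonneg
  have h6 : 0 ≤ (P B).toReal := ENNReal.toReal_nonneg
  rw [abs_le]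
  constructor <;> nlinarith

lemma alphaMix_set_nonempty (P : Measure (ℕ → ℝ)) (i n : ℕ) :
    (0:ℝ) ∈ {c : ℝ | ∃ A B : Set (ℕ → ℝ),
      MeasurableSet[headSigma (i + 1)] A ∧ MeasurableSet[tailSigma (i + n)] B ∧
      c = |(P (A ∩ B)).toReal - (P A).toReal * (P B).toReal|} := by
  refine ⟨∅, ∅, @MeasurableSet.empty _ (headSigma (i+1)),
    @MeasurableSet.empty _ (tailSigma (i+n)), ?_⟩
  simp

lemma abs_le_alphaMix (P : Measure (ℕ → ℝ)) [IsProbabilityMeasure P] {i n : ℕ}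
    {A B : Set (ℕ → ℝ)} (hA : MeasurableSet[headSigma (i + 1)] A)
    (hB : MeasurableSet[tailSigma (i + n)] B) :
    |(P (A ∩ B)).toReal - (P A).toReal * (P B).toReal| ≤ alphaMix P n := by
  refine le_ciSup_of_le ⟨1, ?_⟩ i (le_csSup ⟨1, alphaMix_set_le_one P i n⟩ ⟨A, B, hA, hB, rfl⟩)
  rintro x ⟨i', rfl⟩
  exact csSup_le ⟨0, alphaMix_set_nonempty P i' n⟩ (alphaMix_set_le_one P i' n)

lemma alphaMix_nonneg (P : Measure (ℕ → ℝ)) [IsProbabilityMeasure P] (n : ℕ) :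
    0 ≤ alphaMix P n :=
  le_trans (abs_nonneg _)
    (abs_le_alphaMix P (i := 0) (@MeasurableSet.empty _ (headSigma (0+1)))
      (@MeasurableSet.empty _ (tailSigma (0+n))))

lemma alphaMix_le_one (P : Measure (ℕ → ℝ)) [IsProbabilityMeasure P] (n : ℕ) :
    alphaMix P n ≤ 1 :=
  ciSup_le fun i => csSup_le ⟨0, alphaMix_set_nonempty P i n⟩ (alphaMix_set_le_one P i n)

def Aset (γ : ℝ) (k : ℕ) : Set (ℕ → ℝ) := {ω | ω k ∈ Icc 0 γ}

lemma Aset_meas (γ : ℝ) (k : ℕ) : MeasurableSet (Aset γ k) :=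
  (measurable_pi_apply k) measurableSet_Icc

lemma headSigma_mem (γ : ℝ) (i : ℕ) : MeasurableSet[headSigma (i + 1)] (Aset γ i) := by
  exact ⟨(fun x : Fin (i+1) → ℝ => x ⟨i, Nat.lt_succ_self i⟩) ⁻¹' Icc 0 γ,
    (measurable_pi_apply _) measurableSet_Icc, rfl⟩

lemma tailSigma_mem (γ : ℝ) (j : ℕ) : MeasurableSet[tailSigma j] (Aset γ j) := by
  refine ⟨(fun x : ℕ → ℝ => x 0) ⁻¹' Icc 0 γ, (measurable_pi_apply 0) measurableSet_Icc, ?_⟩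
  ext ω; simp [Aset]

lemma cov_le_alphaMix (P : Measure (ℕ → ℝ)) [IsProbabilityMeasure P] (γ : ℝ) {i j : ℕ}
    (hij : i ≤ j) :
    |(P (Aset γ i ∩ Aset γ j)).toReal - (P (Aset γ i)).toReal * (P (Aset γ j)).toReal|
      ≤ alphaMix P (j - i) := by
  have hB : MeasurableSet[tailSigma (i + (j - i))] (Aset γ j) := by
    rw [Nat.add_sub_cancel' hij]; exact tailSigma_mem γ j
  exact abs_le_alphaMix P (headSigma_mem γ i) hB

def indA (γ : ℝ) (k : ℕ) : (ℕ → ℝ) → ℝ := (Aset γ k).indicator fun _ => 1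

def Tsum (γ : ℝ) (n : ℕ) (ω : ℕ → ℝ) : ℝ := ∑ k ∈ Finset.range n, indA γ k ω

def Msum (P : Measure (ℕ → ℝ)) (γ : ℝ) (n : ℕ) : ℝ :=
  ∑ k ∈ Finset.range n, (P (Aset γ k)).toReal

section var

variable (P : Measure (ℕ → ℝ)) [IsProbabilityMeasure P] (γ : ℝ)

omit [IsProbabilityMeasure P] in
lemma indA_integrable (k : ℕ) [IsFiniteMeasure P] : Integrable (indA γ k) P :=
  (integrable_const 1).indicator (Aset_meas γ k)

omit [IsProbabilityMeasure P] in
lemma indA_integral (k : ℕ) : ∫ ω, indA γ k ω ∂P = (P (Aset γ k)).toReal := by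
  rw [indA, integral_indicator_const (1:ℝ) (Aset_meas γ k)]
  simp [measureReal_def]

lemma Tsum_sq_eq (n : ℕ) (ω : ℕ → ℝ) :
    (Tsum γ n ω) ^ 2 = ∑ i ∈ Finset.range n, ∑ j ∈ Finset.range n,
      (Aset γ i ∩ Aset γ j).indicator (fun _ => (1:ℝ)) ω := by
  rw [Tsum, sq, Finset.sum_mul_sum]
  refine Finset.sum_congr rfl fun i _ => Finset.sum_congr rfl fun j _ => ?_
  by_cases h1 : ω ∈ Aset γ i <;> by_cases h2 : ω ∈ Aset γ j <;>
    simp [indA, Set.indicator_apply, h1, h2, Set.mem_inter_iff]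

lemma Tsum_integrable (n : ℕ) : Integrable (Tsum γ n) P := by
  apply integrable_finset_sum
  intro k _
  exact indA_integrable P γ k

lemma Tsum_sq_integrable (n : ℕ) : Integrable (fun ω => (Tsum γ n ω) ^ 2) P := by
  have h : (fun ω => (Tsum γ n ω) ^ 2) = fun ω => ∑ i ∈ Finset.range n, ∑ j ∈ Finset.range n,
      (Aset γ i ∩ Aset γ j).indicator (fun _ => (1:ℝ)) ω := funext fun ω => Tsum_sq_eq γ n ω
  rw [h]
  apply integrable_finset_sum
  intro i _
  apply integrable_finset_sum
  intro j _
  exact (integrable_const 1).indicator ((Aset_meas γ i).inter (Aset_meas γ j))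

lemma Tsum_integral (n : ℕ) : ∫ ω, Tsum γ n ω ∂P = Msum P γ n := by
  simp only [Tsum, Msum]
  rw [integral_finset_sum _ (fun k _ => indA_integrable P γ k)]
  exact Finset.sum_congr rfl fun k _ => indA_integral P γ k

lemma var_eq (n : ℕ) :
    ∫ ω, (Tsum γ n ω - Msum P γ n) ^ 2 ∂P =
      ∑ i ∈ Finset.range n, ∑ j ∈ Finset.range n,
        ((P (Aset γ i ∩ Aset γ j)).toReal - (P (Aset γ i)).toReal * (P (Aset γ j)).toReal) := by
  have hexp : (fun ω => (Tsum γ n ω - Msum P γ n) ^ 2) =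
      fun ω => (Tsum γ n ω) ^ 2 - (2 * Msum P γ n) * Tsum γ n ω + (Msum P γ n) ^ 2 := by
    funext ω; ring
  have hf2 : Integrable (fun ω => (2 * Msum P γ n) * Tsum γ n ω) P :=
    (Tsum_integrable P γ n).const_mul _
  have hf1 : Integrable (fun ω => (Tsum γ n ω) ^ 2 - (2 * Msum P γ n) * Tsum γ n ω) P :=
    (Tsum_sq_integrable P γ n).sub hf2
  have hstep : ∫ ω, (Tsum γ n ω - Msum P γ n) ^ 2 ∂P =
      (∫ ω, ((Tsum γ n ω) ^ 2 - (2 * Msum P γ n) * Tsum γ n ω) ∂P) +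
        ∫ _ω, (Msum P γ n) ^ 2 ∂P := by
    rw [hexp]
    exact integral_add hf1 (integrable_const _)
  have hstep2 : ∫ ω, ((Tsum γ n ω) ^ 2 - (2 * Msum P γ n) * Tsum γ n ω) ∂P =
      (∫ ω, (Tsum γ n ω) ^ 2 ∂P) - ∫ ω, (2 * Msum P γ n) * Tsum γ n ω ∂P :=
    integral_sub (Tsum_sq_integrable P γ n) hf2
  have hstep3 : ∫ ω, (2 * Msum P γ n) * Tsum γ n ω ∂P = (2 * Msum P γ n) * Msum P γ n := by
    rw [integral_const_mul, Tsum_integral]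
  rw [hstep, hstep2, hstep3, integral_const]
  have hsq : ∫ ω, (Tsum γ n ω) ^ 2 ∂P = ∑ i ∈ Finset.range n, ∑ j ∈ Finset.range n,
      (P (Aset γ i ∩ Aset γ j)).toReal := by
    have h : (fun ω => (Tsum γ n ω) ^ 2) = fun ω => ∑ i ∈ Finset.range n, ∑ j ∈ Finset.range n,
        (Aset γ i ∩ Aset γ j).indicator (fun _ => (1:ℝ)) ω := funext fun ω => Tsum_sq_eq γ n ω
    rw [h, integral_finset_sum _ (fun i _ => integrable_finset_sum _
      (fun j _ => (integrable_const 1).indicator ((Aset_meas γ i).inter (Aset_meas γ j))))]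
    refine Finset.sum_congr rfl fun i _ => ?_
    rw [integral_finset_sum _
      (fun j _ => (integrable_const 1).indicator ((Aset_meas γ i).inter (Aset_meas γ j)))]
    refine Finset.sum_congr rfl fun j _ => ?_
    rw [integral_indicator_const (1:ℝ) ((Aset_meas γ i).inter (Aset_meas γ j))]
    simp [measureReal_def]
  rw [hsq]
  have hM : (Msum P γ n) ^ 2 = ∑ i ∈ Finset.range n, ∑ j ∈ Finset.range n,
      (P (Aset γ i)).toReal * (P (Aset γ j)).toReal := by
    rw [Msum, sq, Finset.sum_mul_sum]
  simp only [measure_univ, ENNReal.toReal_one, probReal_univ, smul_eq_mul, one_smul,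
    Finset.sum_sub_distrib]
  rw [← hM]
  ring

end var

lemma inner_sum_le (α : ℕ → ℝ) (hα : ∀ d, 0 ≤ α d) {n i : ℕ} (hi : i < n) :
    ∑ j ∈ Finset.range n, α (Nat.dist i j) ≤ 2 * ∑ d ∈ Finset.range n, α d := by
  have hsplit : ∑ j ∈ Finset.range n, α (Nat.dist i j) =
      (∑ j ∈ Finset.Ico 0 (i+1), α (Nat.dist i j)) +
      ∑ j ∈ Finset.Ico (i+1) n, α (Nat.dist i j) := by
    rw [Finset.sum_Ico_consecutive _ (Nat.zero_le _) hi, Finset.range_eq_Ico]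
  rw [hsplit]
  have h1 : ∑ j ∈ Finset.Ico 0 (i+1), α (Nat.dist i j) ≤ ∑ d ∈ Finset.range n, α d := by
    have e1 : ∑ j ∈ Finset.Ico 0 (i+1), α (Nat.dist i j) =
        ∑ j ∈ Finset.range (i+1), α (i - j) := by
      rw [← Finset.range_eq_Ico]
      refine Finset.sum_congr rfl fun j hj => ?_
      rw [Nat.dist_eq_sub_of_le_right (Nat.lt_succ_iff.1 (Finset.mem_range.1 hj))]
    have e2 : ∑ j ∈ Finset.range (i+1), α (i - j) = ∑ j ∈ Finset.range (i+1), α j := by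
      have h := Finset.sum_range_reflect (fun j => α j) (i+1)
      simpa using h
    rw [e1, e2]
    exact Finset.sum_le_sum_of_subset_of_nonneg
      (Finset.range_subset_range.2 hi) (fun d _ _ => hα d)
  have h2 : ∑ j ∈ Finset.Ico (i+1) n, α (Nat.dist i j) ≤ ∑ d ∈ Finset.range n, α d := by
    have e1 : ∑ j ∈ Finset.Ico (i+1) n, α (Nat.dist i j) =
        ∑ k ∈ Finset.range (n - (i+1)), α (k + 1) := by
      rw [Finset.sum_Ico_eq_sum_range]
      refine Finset.sum_congr rfl fun k _ => ?_
      congr 1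
      rw [Nat.dist_eq_sub_of_le (by omega)]
      omega
    have e2 : ∑ k ∈ Finset.range (n - (i+1)), α (k + 1) =
        ∑ d ∈ Finset.Ico 1 (n - (i+1) + 1), α d := by
      rw [Finset.sum_Ico_eq_sum_range]
      refine Finset.sum_congr (by rw [Nat.add_sub_cancel]) fun k _ => by rw [Nat.add_comm]
    rw [e1, e2]
    refine Finset.sum_le_sum_of_subset_of_nonneg ?_ (fun d _ _ => hα d)
    intro d hd
    simp only [Finset.mem_Ico] at hd
    simp only [Finset.mem_range]
    omega
  linarith

lemma var_le (P : Measure (ℕ → ℝ)) [IsProbabilityMeasure P] (γ : ℝ) (n : ℕ) :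
    ∫ ω, (Tsum γ n ω - Msum P γ n) ^ 2 ∂P ≤
      (n:ℝ) * (2 * ∑ d ∈ Finset.range n, alphaMix P d) := by
  rw [var_eq]
  calc ∑ i ∈ Finset.range n, ∑ j ∈ Finset.range n,
        ((P (Aset γ i ∩ Aset γ j)).toReal - (P (Aset γ i)).toReal * (P (Aset γ j)).toReal)
      ≤ ∑ i ∈ Finset.range n, ∑ j ∈ Finset.range n, alphaMix P (Nat.dist i j) := by
        refine Finset.sum_le_sum fun i _ => Finset.sum_le_sum fun j _ => ?_
        refine le_trans (le_abs_self _) ?_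
        rcases le_total i j with hij | hij
        · rw [Nat.dist_eq_sub_of_le hij]
          exact cov_le_alphaMix P γ hij
        · rw [Nat.dist_eq_sub_of_le_right hij, Set.inter_comm, mul_comm]
          exact cov_le_alphaMix P γ hij
    _ ≤ ∑ _i ∈ Finset.range n, 2 * ∑ d ∈ Finset.range n, alphaMix P d := by
        refine Finset.sum_le_sum fun i hi => ?_
        exact inner_sum_le _ (alphaMix_nonneg P) (Finset.mem_range.1 hi)
    _ = (n:ℝ) * (2 * ∑ d ∈ Finset.range n, alphaMix P d) := by
        rw [Finset.sum_const, Finset.card_range, nsmul_eq_mul]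

lemma var_integrable (P : Measure (ℕ → ℝ)) [IsProbabilityMeasure P] (γ : ℝ) (n : ℕ) :
    Integrable (fun ω => (Tsum γ n ω - Msum P γ n) ^ 2) P := by
  have h := (((Tsum_sq_integrable P γ n).sub
      ((Tsum_integrable P γ n).const_mul (2 * Msum P γ n))).add
      (integrable_const ((Msum P γ n) ^ 2)))
  exact h.congr (ae_of_all _ fun ω => by simp [Pi.add_apply, Pi.sub_apply]; ring)

lemma cheb (P : Measure (ℕ → ℝ)) [IsProbabilityMeasure P] (γ : ℝ) (n : ℕ) {ε : ℝ}
    (hε : 0 < ε) :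
    P {ω | ε ≤ |Tsum γ n ω - Msum P γ n|} ≤
      ENNReal.ofReal ((n:ℝ) * (2 * ∑ d ∈ Finset.range n, alphaMix P d) / ε ^ 2) := by
  set f := fun ω => (Tsum γ n ω - Msum P γ n) ^ 2 with hf
  have hfint : Integrable f P := var_integrable P γ n
  have markov := mul_meas_ge_le_integral_of_nonneg
    (ae_of_all _ fun ω => sq_nonneg (Tsum γ n ω - Msum P γ n)) hfint (ε ^ 2)
  have hsub : {ω | ε ≤ |Tsum γ n ω - Msum P γ n|} ⊆ {ω | ε ^ 2 ≤ f ω} := by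
    intro ω hω
    have h1 : ε ^ 2 ≤ |Tsum γ n ω - Msum P γ n| ^ 2 := pow_le_pow_left₀ hε.le hω 2
    simpa [hf, sq_abs] using h1
  have hε2 : (0:ℝ) < ε ^ 2 := by positivity
  have h2 : (P {ω | ε ^ 2 ≤ f ω}).toReal ≤ (∫ ω, f ω ∂P) / ε ^ 2 :=
    (le_div_iff₀ hε2).2 (by rw [← measureReal_def]; linarith [markov])
  calc P {ω | ε ≤ |Tsum γ n ω - Msum P γ n|} ≤ P {ω | ε ^ 2 ≤ f ω} := measure_mono hsub
    _ = ENNReal.ofReal ((P {ω | ε ^ 2 ≤ f ω}).toReal) :=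
        (ENNReal.ofReal_toReal (measure_ne_top P _)).symm
    _ ≤ ENNReal.ofReal ((n:ℝ) * (2 * ∑ d ∈ Finset.range n, alphaMix P d) / ε ^ 2) := by
        refine ENNReal.ofReal_le_ofReal (h2.trans ?_)
        gcongr
        exact var_le P γ n

lemma bernoulli_rpow {δ : ℝ} (hδ1 : δ ≤ 1) {j : ℕ} (hj : 1 ≤ j) :
    ((j:ℝ) + 1) ^ δ ≤ (j:ℝ) ^ δ + (j:ℝ) ^ (δ - 1) := by
  have hx : (1:ℝ) ≤ (j:ℝ) := by exact_mod_cast hj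
  have hx0 : (0:ℝ) < (j:ℝ) := by linarith
  have h1 : ((j:ℝ) + 1) = (j:ℝ) * (1 + (j:ℝ)⁻¹) := by field_simp
  rw [h1, Real.mul_rpow (le_of_lt hx0) (by positivity)]
  have h2 : (1 + (j:ℝ)⁻¹) ^ δ ≤ (1 + (j:ℝ)⁻¹) ^ (1:ℝ) :=
    Real.rpow_le_rpow_of_exponent_le (le_add_of_nonneg_right (by positivity)) hδ1
  rw [Real.rpow_one] at h2
  have h4 : (j:ℝ) ^ δ * (j:ℝ)⁻¹ = (j:ℝ) ^ (δ - 1) := by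
    rw [Real.rpow_sub hx0, Real.rpow_one, div_eq_mul_inv]
  have h5 : (0:ℝ) ≤ (j:ℝ) ^ δ := Real.rpow_nonneg (le_of_lt hx0) δ
  calc (j:ℝ) ^ δ * (1 + (j:ℝ)⁻¹) ^ δ ≤ (j:ℝ) ^ δ * (1 + (j:ℝ)⁻¹) :=
        mul_le_mul_of_nonneg_left h2 h5
    _ = (j:ℝ) ^ δ + (j:ℝ) ^ δ * (j:ℝ)⁻¹ := by ring
    _ = (j:ℝ) ^ δ + (j:ℝ) ^ (δ - 1) := by rw [h4]

lemma exp_rpow_eventually_le {δ c p : ℝ} (hδ : 0 < δ) (hc : 0 < c) (hp : 0 < p) :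
    ∀ᶠ j : ℕ in atTop, Real.exp (-(c * (j:ℝ) ^ δ)) ≤ (j:ℝ) ^ (-p) := by
  have h := (isLittleO_log_rpow_atTop hδ).def (by positivity : (0:ℝ) < c / p)
  filter_upwards [tendsto_natCast_atTop_atTop.eventually h, eventually_ge_atTop 1]
    with j h1 h2
  have hx : (1:ℝ) ≤ (j:ℝ) := by exact_mod_cast h2
  have hx0 : (0:ℝ) < (j:ℝ) := by linarith
  have hlog : 0 ≤ Real.log (j:ℝ) := Real.log_nonneg hx
  have hrp : (0:ℝ) ≤ (j:ℝ) ^ δ := Real.rpow_nonneg (le_of_lt hx0) δ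
  rw [Real.norm_eq_abs, Real.norm_eq_abs, abs_of_nonneg hlog, abs_of_nonneg hrp] at h1
  have hkey : p * Real.log (j:ℝ) ≤ c * (j:ℝ) ^ δ := by
    have h3 := mul_le_mul_of_nonneg_left h1 (le_of_lt hp)
    calc p * Real.log (j:ℝ) ≤ p * (c / p * (j:ℝ) ^ δ) := h3
      _ = c * (j:ℝ) ^ δ := by field_simp
  have h4 : (j:ℝ) ^ (-p) = Real.exp (Real.log (j:ℝ) * (-p)) := Real.rpow_def_of_pos hx0 (-p)
  rw [h4, Real.exp_le_exp]
  nlinarith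

lemma summable_exp_rpow {δ c : ℝ} (hδ : 0 < δ) (hc : 0 < c) :
    Summable (fun j : ℕ => Real.exp (-(c * (j:ℝ) ^ δ))) := by
  apply summable_of_isBigO_nat (Real.summable_nat_rpow.2 (by norm_num : (-2:ℝ) < -1))
  rw [Asymptotics.isBigO_iff]
  refine ⟨1, ?_⟩
  filter_upwards [exp_rpow_eventually_le hδ hc (by norm_num : (0:ℝ) < 2),
    eventually_ge_atTop 1] with j h1 h2
  have hx0 : (0:ℝ) < (j:ℝ) := by exact_mod_cast h2
  rw [one_mul, Real.norm_eq_abs, Real.norm_eq_abs, abs_of_pos (Real.exp_pos _),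
    abs_of_nonneg (Real.rpow_nonneg (le_of_lt hx0) _)]
  exact h1

lemma tendsto_mul_exp_rpow {δ : ℝ} (hδ : 0 < δ) :
    Tendsto (fun j : ℕ => ((j:ℝ) + 2) * Real.exp (-((j:ℝ) ^ δ))) atTop (nhds 0) := by
  have hlim : Tendsto (fun j : ℕ => 3 * (j:ℝ) ^ (-2:ℝ)) atTop (nhds 0) := by
    have h := (tendsto_rpow_neg_atTop (by norm_num : (0:ℝ) < 2)).comp
      (tendsto_natCast_atTop_atTop (R := ℝ))
    simpa using h.const_mul 3
  apply tendsto_of_tendsto_of_tendsto_of_le_of_le' tendsto_const_nhds hlim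
  · filter_upwards with j
    positivity
  · filter_upwards [exp_rpow_eventually_le hδ one_pos (by norm_num : (0:ℝ) < 3),
      eventually_ge_atTop 2] with j h1 h2
    have hx : (2:ℝ) ≤ (j:ℝ) := by exact_mod_cast h2
    have hx0 : (0:ℝ) < (j:ℝ) := by linarith
    rw [one_mul] at h1
    have hE : 0 < Real.exp (-((j:ℝ) ^ δ)) := Real.exp_pos _
    have step1 : ((j:ℝ) + 2) * Real.exp (-((j:ℝ) ^ δ)) ≤ 3 * (j:ℝ) * ((j:ℝ) ^ (-3:ℝ)) := by
      have hj2 : (j:ℝ) + 2 ≤ 3 * (j:ℝ) := by linarith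
      calc ((j:ℝ) + 2) * Real.exp (-((j:ℝ) ^ δ)) ≤ 3 * (j:ℝ) * Real.exp (-((j:ℝ) ^ δ)) :=
            mul_le_mul_of_nonneg_right hj2 (le_of_lt hE)
        _ ≤ 3 * (j:ℝ) * ((j:ℝ) ^ (-3:ℝ)) :=
            mul_le_mul_of_nonneg_left h1 (by positivity)
    have step2 : 3 * (j:ℝ) * ((j:ℝ) ^ (-3:ℝ)) = 3 * (j:ℝ) ^ (-2:ℝ) := by
      rw [mul_assoc, ← Real.rpow_one_add' (le_of_lt hx0) (by norm_num)]
      norm_num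
    rw [step2] at step1
    exact step1

def nseq (δ : ℝ) (j : ℕ) : ℕ := j + ⌈Real.exp ((j:ℝ) ^ δ)⌉₊

lemma nseq_ge_exp (δ : ℝ) (j : ℕ) : Real.exp ((j:ℝ) ^ δ) ≤ (nseq δ j : ℝ) := by
  have h := Nat.le_ceil (Real.exp ((j:ℝ) ^ δ))
  calc Real.exp ((j:ℝ) ^ δ) ≤ (⌈Real.exp ((j:ℝ) ^ δ)⌉₊ : ℝ) := h
    _ ≤ (nseq δ j : ℝ) := by simp [nseq]

lemma nseq_ge_one (δ : ℝ) (j : ℕ) : 1 ≤ nseq δ j := by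
  have h : 0 < ⌈Real.exp ((j:ℝ) ^ δ)⌉₊ := Nat.ceil_pos.2 (Real.exp_pos _)
  simp [nseq]; omega

lemma nseq_pos_real (δ : ℝ) (j : ℕ) : (0:ℝ) < (nseq δ j : ℝ) := by
  exact_mod_cast Nat.lt_of_lt_of_le Nat.zero_lt_one (nseq_ge_one δ j)

lemma nseq_gt_self (δ : ℝ) (j : ℕ) : j < nseq δ j := by
  have h : 0 < ⌈Real.exp ((j:ℝ) ^ δ)⌉₊ := Nat.ceil_pos.2 (Real.exp_pos _)
  simp only [nseq]; omega

lemma nseq_strictMono {δ : ℝ} (hδ : 0 < δ) : StrictMono (nseq δ) := by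
  intro j k hjk
  have hle : ((j:ℝ)) ^ δ ≤ ((k:ℝ)) ^ δ :=
    Real.rpow_le_rpow (Nat.cast_nonneg j) (by exact_mod_cast hjk.le) hδ.le
  have h : ⌈Real.exp ((j:ℝ) ^ δ)⌉₊ ≤ ⌈Real.exp ((k:ℝ) ^ δ)⌉₊ :=
    Nat.ceil_mono (Real.exp_le_exp.2 hle)
  simp only [nseq]; omega

lemma nseq_mono {δ : ℝ} (hδ : 0 < δ) : Monotone (nseq δ) := (nseq_strictMono hδ).monotone

lemma nseq_tendsto {δ : ℝ} (hδ : 0 < δ) : Tendsto (nseq δ) atTop atTop :=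
  (nseq_strictMono hδ).tendsto_atTop

lemma nseq_ratio_tendsto {δ : ℝ} (hδ0 : 0 < δ) (hδ1 : δ < 1) :
    Tendsto (fun j => (nseq δ (j+1) : ℝ) / (nseq δ j : ℝ)) atTop (nhds 1) := by
  have hupper : ∀ j : ℕ, 1 ≤ j →
      (nseq δ (j+1) : ℝ) / (nseq δ j : ℝ) ≤
        Real.exp ((j:ℝ) ^ (δ - 1)) + ((j:ℝ) + 2) * Real.exp (-((j:ℝ) ^ δ)) := by
    intro j hj
    have hden : (0:ℝ) < (nseq δ j : ℝ) := nseq_pos_real δ j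
    rw [div_le_iff₀ hden]
    have hnum : (nseq δ (j+1) : ℝ) ≤ Real.exp ((j:ℝ) ^ δ + (j:ℝ) ^ (δ - 1)) + ((j:ℝ) + 2) := by
      have hceil : (⌈Real.exp (((j:ℝ)+1) ^ δ)⌉₊ : ℝ) < Real.exp (((j:ℝ)+1) ^ δ) + 1 :=
        Nat.ceil_lt_add_one (le_of_lt (Real.exp_pos (((j:ℝ)+1) ^ δ)))
      have hexp : Real.exp (((j:ℝ)+1) ^ δ) ≤ Real.exp ((j:ℝ) ^ δ + (j:ℝ) ^ (δ - 1)) :=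
        Real.exp_le_exp.2 (bernoulli_rpow hδ1.le hj)
      have hns : (nseq δ (j+1) : ℝ) = ((j:ℝ) + 1) + (⌈Real.exp (((j:ℝ)+1) ^ δ)⌉₊ : ℝ) := by
        simp only [nseq]
        push_cast
        ring
      rw [hns]
      have hj1 : (1:ℝ) ≤ (j:ℝ) := by exact_mod_cast hj
      linarith
    have hRHS : (Real.exp ((j:ℝ) ^ (δ - 1)) + ((j:ℝ) + 2) * Real.exp (-((j:ℝ) ^ δ))) *
        Real.exp ((j:ℝ) ^ δ) = Real.exp ((j:ℝ) ^ δ + (j:ℝ) ^ (δ - 1)) + ((j:ℝ) + 2) := by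
      rw [add_mul, ← Real.exp_add, mul_assoc, ← Real.exp_add]
      simp [add_comm]
    have hden2 : Real.exp ((j:ℝ) ^ δ) ≤ (nseq δ j : ℝ) := nseq_ge_exp δ j
    have hRHS_nonneg : 0 ≤ Real.exp ((j:ℝ) ^ (δ - 1)) +
        ((j:ℝ) + 2) * Real.exp (-((j:ℝ) ^ δ)) := by positivity
    calc (nseq δ (j+1) : ℝ) ≤ Real.exp ((j:ℝ) ^ δ + (j:ℝ) ^ (δ - 1)) + ((j:ℝ) + 2) := hnum
      _ = (Real.exp ((j:ℝ) ^ (δ - 1)) + ((j:ℝ) + 2) * Real.exp (-((j:ℝ) ^ δ))) *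
          Real.exp ((j:ℝ) ^ δ) := hRHS.symm
      _ ≤ (Real.exp ((j:ℝ) ^ (δ - 1)) + ((j:ℝ) + 2) * Real.exp (-((j:ℝ) ^ δ))) *
          (nseq δ j : ℝ) := mul_le_mul_of_nonneg_left hden2 hRHS_nonneg
  have hlim : Tendsto (fun j : ℕ => Real.exp ((j:ℝ) ^ (δ - 1)) +
      ((j:ℝ) + 2) * Real.exp (-((j:ℝ) ^ δ))) atTop (nhds 1) := by
    have h1 : Tendsto (fun j : ℕ => Real.exp ((j:ℝ) ^ (δ - 1))) atTop (nhds 1) := by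
      have h0 : Tendsto (fun j : ℕ => ((j:ℝ)) ^ (δ - 1)) atTop (nhds 0) := by
        have h := (tendsto_rpow_neg_atTop (by linarith : (0:ℝ) < 1 - δ)).comp
          (tendsto_natCast_atTop_atTop (R := ℝ))
        have heq : (fun j : ℕ => ((j:ℝ)) ^ (δ - 1)) =
            (fun x : ℝ => x ^ (-(1 - δ))) ∘ (Nat.cast : ℕ → ℝ) := by
          funext j
          simp only [Function.comp_apply]
          congr 1
          ring
        rw [heq]
        exact h
      have h2 := (Real.continuous_exp.tendsto 0).comp h0
      simpa [Function.comp_def] using h2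
    have h2 := tendsto_mul_exp_rpow hδ0
    have h3 := h1.add h2
    simpa using h3
  have hlower : ∀ j : ℕ, 1 ≤ (nseq δ (j+1) : ℝ) / (nseq δ j : ℝ) := by
    intro j
    rw [le_div_iff₀ (nseq_pos_real δ j), one_mul]
    exact_mod_cast (nseq_mono hδ0) (Nat.le_succ j)
  apply tendsto_of_tendsto_of_tendsto_of_le_of_le' tendsto_const_nhds hlim
  · filter_upwards with j using hlower j
  · filter_upwards [eventually_ge_atTop 1] with j hj using hupper j hj

lemma nseq_ratio_inv_tendsto {δ : ℝ} (hδ0 : 0 < δ) (hδ1 : δ < 1) :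
    Tendsto (fun j => (nseq δ j : ℝ) / (nseq δ (j+1) : ℝ)) atTop (nhds 1) := by
  have h := (nseq_ratio_tendsto hδ0 hδ1).inv₀ one_ne_zero
  simp only [inv_div, inv_one] at h
  exact h

def Jidx (δ : ℝ) (n : ℕ) : ℕ := Nat.findGreatest (fun j => nseq δ j ≤ n) n

lemma Jidx_spec {δ : ℝ} (hδ0 : 0 < δ) {n : ℕ} (hn : 1 ≤ n) :
    nseq δ (Jidx δ n) ≤ n ∧ n < nseq δ (Jidx δ n + 1) := by
  have h0 : nseq δ 0 ≤ n := by
    have h1 : nseq δ 0 = 1 := by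
      simp [nseq, Real.zero_rpow hδ0.ne', Real.exp_zero]
    omega
  constructor
  · exact Nat.findGreatest_spec (P := fun j => nseq δ j ≤ n) (Nat.zero_le n) h0
  · by_cases hcase : Jidx δ n + 1 ≤ n
    · have h3 := Nat.findGreatest_is_greatest (P := fun j => nseq δ j ≤ n)
        (by omega : Jidx δ n < Jidx δ n + 1) hcase
      omega
    · have h1 : n < Jidx δ n + 1 := by omega
      have h2 := nseq_gt_self δ (Jidx δ n + 1)
      omega

lemma Jidx_tendsto {δ : ℝ} : Tendsto (Jidx δ) atTop atTop := by
  rw [tendsto_atTop]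
  intro j
  filter_upwards [eventually_ge_atTop (nseq δ j)] with n hn
  exact Nat.le_findGreatest (le_trans (nseq_gt_self δ j).le hn) hn

lemma bridge {δ : ℝ} (hδ0 : 0 < δ) (hδ1 : δ < 1) (u : ℕ → ℝ) (hu0 : ∀ n, 0 ≤ u n)
    (humono : Monotone u) (b : ℝ)
    (h1 : Tendsto (fun j => u (nseq δ j) / (nseq δ j : ℝ)) atTop (nhds b)) :
    Tendsto (fun n => u n / (n:ℝ)) atTop (nhds b) := by
  set lo : ℕ → ℝ := fun j => ((nseq δ j : ℝ) / (nseq δ (j+1) : ℝ)) *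
    (u (nseq δ j) / (nseq δ j : ℝ)) with hlo_def
  set hi : ℕ → ℝ := fun j => ((nseq δ (j+1) : ℝ) / (nseq δ j : ℝ)) *
    (u (nseq δ (j+1)) / (nseq δ (j+1) : ℝ)) with hhi_def
  have hlo : Tendsto lo atTop (nhds b) := by
    have h := (nseq_ratio_inv_tendsto hδ0 hδ1).mul h1
    simpa using h
  have hhi : Tendsto hi atTop (nhds b) := by
    have h1' : Tendsto (fun j => u (nseq δ (j+1)) / (nseq δ (j+1) : ℝ)) atTop (nhds b) :=
      h1.comp (tendsto_add_atTop_nat 1)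
    have h := (nseq_ratio_tendsto hδ0 hδ1).mul h1'
    simpa using h
  apply tendsto_of_tendsto_of_tendsto_of_le_of_le' (hlo.comp Jidx_tendsto) (hhi.comp Jidx_tendsto)
  · filter_upwards [eventually_ge_atTop 1] with n hn
    obtain ⟨hJ1, hJ2⟩ := Jidx_spec (δ := δ) hδ0 hn
    set j := Jidx δ n
    have hn0 : (0:ℝ) < (n:ℝ) := by exact_mod_cast hn
    have e1 : lo j = u (nseq δ j) / (nseq δ (j+1) : ℝ) := by
      rw [hlo_def]
      field_simp
      rw [div_eq_div_iff (mul_pos (nseq_pos_real δ j) (nseq_pos_real δ (j+1))).ne'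
        (nseq_pos_real δ (j+1)).ne']
      ring
    rw [Function.comp_apply, e1]
    exact div_le_div₀ (hu0 n) (humono hJ1) hn0 (by exact_mod_cast hJ2.le)
  · filter_upwards [eventually_ge_atTop 1] with n hn
    obtain ⟨hJ1, hJ2⟩ := Jidx_spec (δ := δ) hδ0 hn
    set j := Jidx δ n
    have e1 : hi j = u (nseq δ (j+1)) / (nseq δ j : ℝ) := by
      rw [hhi_def]
      field_simp
      rw [div_eq_div_iff (mul_pos (nseq_pos_real δ (j+1)) (nseq_pos_real δ j)).ne'
        (nseq_pos_real δ j).ne']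
      ring
    rw [Function.comp_apply, e1]
    have hle : n ≤ nseq δ (j+1) := hJ2.le
    exact div_le_div₀ (hu0 _) (humono hle) (nseq_pos_real δ j) (by exact_mod_cast hJ1)

theorem stmt9 (Ω₀ : Set ℝ) (hΩ₀sub : Ω₀ ⊆ Ioo (0:ℝ) 1) (hΩ₀int : Ω₀.OrdConnected)
    (P : Measure (ℕ → ℝ)) (hP : IsProbabilityMeasure P)
    (hsupp : P {ω | ∀ n, ω n ∈ Ω₀} = 1)
    (γ : ℝ) (hγ : γ ∈ Ω₀)
    (Pbar : Measure (ℕ → ℝ)) (hPbar : IsProbabilityMeasure Pbar)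
    -- (B1): asymptotic mean stationarity
    (hB1 : ∀ g : (ℕ → ℝ) → ℝ, Measurable g → (∃ M : ℝ, ∀ ω, |g ω| ≤ M) →
      Tendsto (fun n : ℕ => ∫ ω, (n : ℝ)⁻¹ * ∑ k ∈ Finset.range n, g (shift^[k] ω) ∂P)
        atTop (nhds (∫ ω, g ω ∂Pbar)))
    -- (B2): strong mixing with logarithmic rate
    (hB2 : ∃ β : ℝ, 1 < β ∧ ∃ C : ℝ, ∀ n : ℕ, 2 ≤ n →
      alphaMix P n ≤ C * (Real.log n) ^ (-β))
    -- (B3)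
    (hB3 : 0 < Pbar {ω | ω 0 ≤ γ}) :
    ∃ b : ℝ, 0 < b ∧ b = (Pbar {ω | ω 0 ≤ γ}).toReal ∧
      ∀ᵐ ω ∂P,
        Tendsto
          (fun n : ℕ => (n : ℝ)⁻¹ *
            ∑ k ∈ Finset.range n, (Icc (0:ℝ) γ).indicator (fun _ => (1:ℝ)) (ω k))
          atTop (nhds b) := by
  obtain ⟨β, hβ, C, hC⟩ := hB2
  have hβ0 : (0:ℝ) < β := by linarith
  set δ : ℝ := (1 + β⁻¹) / 2 with hδ_def
  have hβinv0 : 0 < β⁻¹ := by positivity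
  have hβinv1 : β⁻¹ < 1 := by
    rw [inv_lt_one_iff₀]
    right; exact hβ
  have hδ0 : 0 < δ := by rw [hδ_def]; linarith
  have hδ1 : δ < 1 := by rw [hδ_def]; linarith
  have hδβ : 1 < δ * β := by
    have hne : β ≠ 0 := ne_of_gt hβ0
    have h1 : δ * β = (β + 1) / 2 := by
      rw [hδ_def]
      field_simp
    rw [h1]
    linarith
  have hC0 : 0 ≤ C := by
    have h1 := hC 3 (by norm_num)
    have h2 : (0:ℝ) < Real.log ((3:ℕ):ℝ) := by
      apply Real.log_pos
      norm_num
    have h3 : (0:ℝ) < Real.log ((3:ℕ):ℝ) ^ (-β) := Real.rpow_pos_of_pos h2 (-β)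
    nlinarith [alphaMix_nonneg P 3]
  set b : ℝ := (Pbar {ω | ω 0 ≤ γ}).toReal with hb_def
  have hb_pos : 0 < b := ENNReal.toReal_pos hB3.ne' (measure_ne_top _ _)
  refine ⟨b, hb_pos, rfl, ?_⟩
  -- (1) the target sum equals `Tsum`
  have hsum_eq : ∀ (ω : ℕ → ℝ) (n : ℕ),
      (n : ℝ)⁻¹ * ∑ k ∈ Finset.range n, (Icc (0:ℝ) γ).indicator (fun _ => (1:ℝ)) (ω k)
        = Tsum γ n ω / (n:ℝ) := by
    intro ω n
    rw [inv_mul_eq_div]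
    congr 1
  -- (2) mean convergence
  have hPbarN : Pbar {ω : ℕ → ℝ | ω 0 < 0} = 0 := by
    set g₁ : (ℕ → ℝ) → ℝ := fun ω => (Iio (0:ℝ)).indicator (fun _ => (1:ℝ)) (ω 0) with hg₁
    have hg₁meas : Measurable g₁ :=
      (measurable_const.indicator measurableSet_Iio).comp (measurable_pi_apply 0)
    have hg₁bd : ∃ M : ℝ, ∀ ω, |g₁ ω| ≤ M := by
      refine ⟨1, fun ω => ?_⟩
      rw [hg₁]
      simp only [Set.indicator_apply]
      split_ifs <;> norm_num
    have h1 := hB1 g₁ hg₁meas hg₁bd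
    have hNk : ∀ k : ℕ, P {ω : ℕ → ℝ | ω k ∈ Iio 0} = 0 := by
      intro k
      have hms : MeasurableSet {ω : ℕ → ℝ | ω k ∈ Iio 0} :=
        (measurable_pi_apply k) measurableSet_Iio
      rw [← prob_compl_eq_one_iff hms]
      refine le_antisymm prob_le_one ?_
      rw [← hsupp]
      apply measure_mono
      intro ω hω
      have h2 := hΩ₀sub (hω k)
      simp only [Set.mem_compl_iff, Set.mem_setOf_eq, Set.mem_Iio, not_lt]
      exact le_of_lt h2.1
    have hzero : ∀ n : ℕ,
        ∫ ω, (n:ℝ)⁻¹ * ∑ k ∈ Finset.range n, g₁ (shift^[k] ω) ∂P = 0 := by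
      intro n
      have hteq : ∀ (k : ℕ) (ω : ℕ → ℝ), g₁ (shift^[k] ω) =
          ({ω' : ℕ → ℝ | ω' k ∈ Iio 0}).indicator (fun _ => (1:ℝ)) ω := by
        intro k ω
        rw [hg₁]
        simp [shift_iterate, Set.indicator_apply]
      simp only [hteq]
      rw [integral_const_mul, integral_finset_sum _ (fun k _ =>
        (integrable_const (1:ℝ)).indicator
          (show MeasurableSet {ω' : ℕ → ℝ | ω' k ∈ Iio 0} from
            (measurable_pi_apply k) measurableSet_Iio))]
      have hallz : ∀ k ∈ Finset.range n,
          ∫ ω, ({ω' : ℕ → ℝ | ω' k ∈ Iio 0}).indicator (fun _ => (1:ℝ)) ω ∂P = 0 := by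
        intro k _
        rw [integral_indicator_const (1:ℝ) (show MeasurableSet {ω' : ℕ → ℝ | ω' k ∈ Iio 0} from
          (measurable_pi_apply k) measurableSet_Iio), measureReal_def, hNk k]
        simp
      rw [Finset.sum_congr rfl hallz]
      simp
    have h2 : Tendsto (fun _ : ℕ => (0:ℝ)) atTop (nhds (∫ ω, g₁ ω ∂Pbar)) := by
      have heq : (fun n : ℕ =>
          ∫ ω, (n:ℝ)⁻¹ * ∑ k ∈ Finset.range n, g₁ (shift^[k] ω) ∂P) = fun _ => (0:ℝ) :=
        funext hzero
      rwa [heq] at h1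
    have h3 : ∫ ω, g₁ ω ∂Pbar = 0 :=
      tendsto_nhds_unique h2 tendsto_const_nhds
    have h4 : ∫ ω, g₁ ω ∂Pbar = (Pbar {ω : ℕ → ℝ | ω 0 ∈ Iio 0}).toReal := by
      have hfe : g₁ = ({ω' : ℕ → ℝ | ω' 0 ∈ Iio 0}).indicator (fun _ => (1:ℝ)) := by
        funext ω
        rw [hg₁]
        simp [Set.indicator_apply]
      rw [hfe, integral_indicator_const (1:ℝ) (show MeasurableSet {ω' : ℕ → ℝ | ω' 0 ∈ Iio 0} from
        (measurable_pi_apply 0) measurableSet_Iio)]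
      simp [measureReal_def]
    rw [h4] at h3
    have h5 := (ENNReal.toReal_eq_zero_iff _).1 h3
    have h6 : Pbar {ω : ℕ → ℝ | ω 0 ∈ Iio 0} ≠ ⊤ := measure_ne_top _ _
    have h7 : Pbar {ω : ℕ → ℝ | ω 0 ∈ Iio 0} = 0 := by tauto
    exact h7
  have hPbarA : Pbar (Aset γ 0) = Pbar {ω | ω 0 ≤ γ} := by
    apply le_antisymm
    · apply measure_mono
      intro ω hω
      exact hω.2
    · calc Pbar {ω | ω 0 ≤ γ} ≤ Pbar (Aset γ 0 ∪ {ω : ℕ → ℝ | ω 0 < 0}) := by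
            apply measure_mono
            intro ω hω
            by_cases h : 0 ≤ ω 0
            · exact Or.inl ⟨h, hω⟩
            · exact Or.inr (lt_of_not_ge h)
        _ ≤ Pbar (Aset γ 0) + Pbar {ω : ℕ → ℝ | ω 0 < 0} := measure_union_le _ _
        _ = Pbar (Aset γ 0) := by rw [hPbarN, add_zero]
  have hμ : Tendsto (fun n : ℕ => Msum P γ n / (n:ℝ)) atTop (nhds b) := by
    set g₀ : (ℕ → ℝ) → ℝ := fun ω => (Icc (0:ℝ) γ).indicator (fun _ => (1:ℝ)) (ω 0) with hg₀
    have hg₀meas : Measurable g₀ :=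
      (measurable_const.indicator measurableSet_Icc).comp (measurable_pi_apply 0)
    have hg₀bd : ∃ M : ℝ, ∀ ω, |g₀ ω| ≤ M := by
      refine ⟨1, fun ω => ?_⟩
      rw [hg₀]
      simp only [Set.indicator_apply]
      split_ifs <;> norm_num
    have h1 := hB1 g₀ hg₀meas hg₀bd
    have hteq : ∀ (k : ℕ) (ω : ℕ → ℝ), g₀ (shift^[k] ω) = indA γ k ω := by
      intro k ω
      rw [hg₀]
      simp [shift_iterate, indA, Aset, Set.indicator_apply]
    have h2 : (fun n : ℕ => ∫ ω, (n:ℝ)⁻¹ * ∑ k ∈ Finset.range n, g₀ (shift^[k] ω) ∂P)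
        = fun n : ℕ => Msum P γ n / (n:ℝ) := by
      funext n
      simp only [hteq]
      have h3 : ∀ ω, ∑ k ∈ Finset.range n, indA γ k ω = Tsum γ n ω := fun ω => rfl
      simp only [h3]
      rw [integral_const_mul, Tsum_integral, inv_mul_eq_div]
    rw [h2] at h1
    have h4 : ∫ ω, g₀ ω ∂Pbar = b := by
      have hfe : g₀ = indA γ 0 := by
        funext ω
        rw [hg₀]
        simp [indA, Aset, Set.indicator_apply]
      rw [hfe, indA_integral, hb_def, hPbarA]
    rwa [h4] at h1
  -- (3) Chebyshev bound on the subsequence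
  set G : ℕ → ℕ → ℝ := fun m j => 2 * ((m:ℝ)+1)^2 *
    (2 * Real.exp (-(2⁻¹ * (j:ℝ)^δ)) + C * 2^β * (j:ℝ)^(-(δ*β))) with hG_def
  set Ebad : ℕ → ℕ → Set (ℕ → ℝ) := fun m j =>
    {ω | (nseq δ j : ℝ) * ((m:ℝ)+1)⁻¹ ≤ |Tsum γ (nseq δ j) ω - Msum P γ (nseq δ j)|}
    with hEbad_def
  have hGnn : ∀ m j, 0 ≤ G m j := by
    intro m j
    rw [hG_def]
    have h1 : (0:ℝ) ≤ C * 2^β * (j:ℝ)^(-(δ*β)) := by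
      apply mul_nonneg
      apply mul_nonneg hC0
      · positivity
      · exact Real.rpow_nonneg (Nat.cast_nonneg j) _
    positivity
  have hGsum : ∀ m : ℕ, Summable (G m) := by
    intro m
    rw [hG_def]
    apply Summable.mul_left
    apply Summable.add
    · exact (summable_exp_rpow hδ0 (by norm_num : (0:ℝ) < 2⁻¹)).mul_left 2
    · exact ((Real.summable_nat_rpow).2 (by linarith : -(δ*β) < -1)).mul_left (C * 2^β)
  have hPE : ∀ m : ℕ, ∀ᶠ j : ℕ in atTop, P (Ebad m j) ≤ ENNReal.ofReal (G m j) := by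
    intro m
    have hεm : (0:ℝ) < ((m:ℝ)+1)⁻¹ := by positivity
    have hev1 : ∀ᶠ j : ℕ in atTop, (2:ℝ) ≤ (j:ℝ)^δ :=
      ((tendsto_rpow_atTop hδ0).comp (tendsto_natCast_atTop_atTop (R:=ℝ))).eventually_ge_atTop 2
    filter_upwards [hev1, eventually_ge_atTop 1] with j hj2 hj1
    have hj0 : (0:ℝ) < (j:ℝ) := by exact_mod_cast hj1
    set n : ℕ := nseq δ j with hn_def
    set Mj : ℕ := ⌈Real.exp ((j:ℝ)^δ/2)⌉₊ with hMj_def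
    have hn_exp : Real.exp ((j:ℝ)^δ) ≤ (n:ℝ) := nseq_ge_exp δ j
    have hn_pos : (0:ℝ) < (n:ℝ) := nseq_pos_real δ j
    have hMj_ge : Real.exp ((j:ℝ)^δ/2) ≤ (Mj:ℝ) := Nat.le_ceil _
    have hMj_le : (Mj:ℝ) ≤ 2 * Real.exp ((j:ℝ)^δ/2) := by
      have he1 : (1:ℝ) ≤ Real.exp ((j:ℝ)^δ/2) := Real.one_le_exp (by positivity)
      have he2 := Nat.ceil_lt_add_one (le_of_lt (Real.exp_pos ((j:ℝ)^δ/2)))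
      rw [hMj_def]
      linarith
    have hMj2 : 2 ≤ Mj := by
      have h2 : (2:ℝ) ≤ Real.exp ((j:ℝ)^δ/2) := by
        calc (2:ℝ) ≤ Real.exp 1 := by
              have h := Real.add_one_le_exp (1:ℝ)
              linarith
          _ ≤ Real.exp ((j:ℝ)^δ/2) := Real.exp_le_exp.2 (by linarith)
      have h3 : (2:ℝ) ≤ (Mj:ℝ) := le_trans h2 hMj_ge
      exact_mod_cast h3
    have hMn : Mj ≤ n := by
      have hh1 : (0:ℝ) ≤ (j:ℝ)^δ := Real.rpow_nonneg (le_of_lt hj0) δ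
      have h1 : Real.exp ((j:ℝ)^δ/2) ≤ Real.exp ((j:ℝ)^δ) := Real.exp_le_exp.2 (by linarith)
      calc Mj ≤ ⌈Real.exp ((j:ℝ)^δ)⌉₊ := Nat.ceil_mono h1
        _ ≤ n := by rw [hn_def]; simp [nseq]
    -- bound on the alpha-sum
    have hW : ∑ d ∈ Finset.range n, alphaMix P d ≤
        (Mj:ℝ) + (n:ℝ) * (C * 2^β * (j:ℝ)^(-(δ*β))) := by
      have hsplit : ∑ d ∈ Finset.range n, alphaMix P d =
          (∑ d ∈ Finset.Ico 0 Mj, alphaMix P d) + ∑ d ∈ Finset.Ico Mj n, alphaMix P d := by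
        rw [Finset.sum_Ico_consecutive _ (Nat.zero_le Mj) hMn, Finset.range_eq_Ico]
      have hpart1 : ∑ d ∈ Finset.Ico 0 Mj, alphaMix P d ≤ (Mj:ℝ) := by
        calc ∑ d ∈ Finset.Ico 0 Mj, alphaMix P d ≤ ∑ _d ∈ Finset.Ico 0 Mj, (1:ℝ) :=
              Finset.sum_le_sum fun d _ => alphaMix_le_one P d
          _ = (Mj:ℝ) := by simp
      have hbd : ∀ d ∈ Finset.Ico Mj n, alphaMix P d ≤ C * 2^β * (j:ℝ)^(-(δ*β)) := by
        intro d hd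
        obtain ⟨hd1, hd2⟩ := Finset.mem_Ico.1 hd
        have hd2' : 2 ≤ d := le_trans hMj2 hd1
        have step1 := hC d hd2'
        have hMjpos : (0:ℝ) < (Mj:ℝ) := by
          have : (0:ℕ) < Mj := by omega
          exact_mod_cast this
        have hdcast : (Mj:ℝ) ≤ (d:ℝ) := by exact_mod_cast hd1
        have hlogd : (j:ℝ)^δ/2 ≤ Real.log (d:ℝ) := by
          calc (j:ℝ)^δ/2 = Real.log (Real.exp ((j:ℝ)^δ/2)) := (Real.log_exp _).symm
            _ ≤ Real.log (Mj:ℝ) := Real.log_le_log (Real.exp_pos _) hMj_ge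
            _ ≤ Real.log (d:ℝ) := Real.log_le_log hMjpos hdcast
        have hx_pos : (0:ℝ) < (j:ℝ)^δ/2 := by
          have : (0:ℝ) < (j:ℝ)^δ := Real.rpow_pos_of_pos hj0 δ
          linarith
        have hrp : Real.log (d:ℝ) ^ (-β) ≤ ((j:ℝ)^δ/2) ^ (-β) := by
          rw [Real.rpow_neg (le_of_lt hx_pos),
            Real.rpow_neg (le_trans (le_of_lt hx_pos) hlogd)]
          exact inv_anti₀ (Real.rpow_pos_of_pos hx_pos β)
            (Real.rpow_le_rpow (le_of_lt hx_pos) hlogd (le_of_lt hβ0))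
        have heq : ((j:ℝ)^δ/2) ^ (-β) = 2^β * (j:ℝ)^(-(δ*β)) := by
          have hmb : δ * (-β) = -(δ*β) := by ring
          rw [Real.div_rpow (Real.rpow_nonneg (le_of_lt hj0) δ) (by norm_num : (0:ℝ) ≤ 2),
            ← Real.rpow_mul (le_of_lt hj0), hmb, Real.rpow_neg (by norm_num : (0:ℝ) ≤ 2),
            div_eq_mul_inv, inv_inv, mul_comm]
        calc alphaMix P d ≤ C * Real.log (d:ℝ) ^ (-β) := step1
          _ ≤ C * ((j:ℝ)^δ/2)^(-β) := mul_le_mul_of_nonneg_left hrp hC0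
          _ = C * (2^β * (j:ℝ)^(-(δ*β))) := by rw [heq]
          _ = C * 2^β * (j:ℝ)^(-(δ*β)) := by ring
      have hccnn : (0:ℝ) ≤ C * 2^β * (j:ℝ)^(-(δ*β)) := by
        apply mul_nonneg (mul_nonneg hC0 (by positivity))
        exact Real.rpow_nonneg (Nat.cast_nonneg j) _
      have hpart2 : ∑ d ∈ Finset.Ico Mj n, alphaMix P d ≤
          (n:ℝ) * (C * 2^β * (j:ℝ)^(-(δ*β))) := by
        calc ∑ d ∈ Finset.Ico Mj n, alphaMix P d
            ≤ ∑ _d ∈ Finset.Ico Mj n, (C * 2^β * (j:ℝ)^(-(δ*β))) := Finset.sum_le_sum hbd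
          _ = ((Finset.Ico Mj n).card : ℝ) * (C * 2^β * (j:ℝ)^(-(δ*β))) := by
              rw [Finset.sum_const, nsmul_eq_mul]
          _ ≤ (n:ℝ) * (C * 2^β * (j:ℝ)^(-(δ*β))) := by
              apply mul_le_mul_of_nonneg_right _ hccnn
              rw [Nat.card_Ico]
              exact_mod_cast Nat.sub_le n Mj
      rw [hsplit]
      linarith
    -- apply Chebyshev
    have hch := cheb P γ n (ε := (n:ℝ) * ((m:ℝ)+1)⁻¹) (by positivity)
    refine le_trans hch (ENNReal.ofReal_le_ofReal ?_)
    set W : ℝ := ∑ d ∈ Finset.range n, alphaMix P d with hW_def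
    have hWnn : 0 ≤ W := Finset.sum_nonneg fun d _ => alphaMix_nonneg P d
    have hfrac : (n:ℝ) * (2 * W) / ((n:ℝ) * ((m:ℝ)+1)⁻¹) ^ 2 =
        2 * ((m:ℝ)+1)^2 * (W / (n:ℝ)) := by
      field_simp
    rw [hfrac, hG_def]
    have hWn2 : W / (n:ℝ) ≤ 2 * Real.exp (-(2⁻¹*(j:ℝ)^δ)) + C * 2^β * (j:ℝ)^(-(δ*β)) := by
      rw [div_le_iff₀ hn_pos]
      have he : Real.exp (-(2⁻¹*(j:ℝ)^δ)) * Real.exp ((j:ℝ)^δ) = Real.exp ((j:ℝ)^δ/2) := by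
        rw [← Real.exp_add]
        congr 1
        ring
      have hMbound : (Mj:ℝ) ≤ 2 * Real.exp (-(2⁻¹*(j:ℝ)^δ)) * (n:ℝ) := by
        calc (Mj:ℝ) ≤ 2 * Real.exp ((j:ℝ)^δ/2) := hMj_le
          _ = 2 * (Real.exp (-(2⁻¹*(j:ℝ)^δ)) * Real.exp ((j:ℝ)^δ)) := by rw [he]
          _ ≤ 2 * (Real.exp (-(2⁻¹*(j:ℝ)^δ)) * (n:ℝ)) := by
              have hpos := le_of_lt (Real.exp_pos (-(2⁻¹*(j:ℝ)^δ)))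
              gcongr
          _ = 2 * Real.exp (-(2⁻¹*(j:ℝ)^δ)) * (n:ℝ) := by ring
      have hcc : (0:ℝ) ≤ C * 2^β * (j:ℝ)^(-(δ*β)) := by
        apply mul_nonneg (mul_nonneg hC0 (by positivity))
        exact Real.rpow_nonneg (Nat.cast_nonneg j) _
      have hx : (2 * Real.exp (-(2⁻¹*(j:ℝ)^δ)) + C * 2^β * (j:ℝ)^(-(δ*β))) * (n:ℝ) =
          2 * Real.exp (-(2⁻¹*(j:ℝ)^δ)) * (n:ℝ) +
            (n:ℝ) * (C * 2^β * (j:ℝ)^(-(δ*β))) := by ring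
      rw [hx]
      linarith [hW, hMbound]
    have hc2 : (0:ℝ) ≤ 2 * ((m:ℝ)+1)^2 := by positivity
    exact mul_le_mul_of_nonneg_left hWn2 hc2
  -- (4) Borel-Cantelli
  have hae : ∀ m : ℕ, ∀ᵐ ω ∂P, ∀ᶠ j in atTop, ω ∉ Ebad m j := by
    intro m
    obtain ⟨j₁, hj₁⟩ := eventually_atTop.1 (hPE m)
    have hsum_ne : (∑' j : ℕ, P (Ebad m (j + j₁))) ≠ ⊤ := by
      have h1 : ∑' j : ℕ, P (Ebad m (j + j₁)) ≤ ∑' j : ℕ, ENNReal.ofReal (G m (j + j₁)) :=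
        ENNReal.tsum_le_tsum fun j => hj₁ (j + j₁) (by omega)
      have h2 : ∑' j : ℕ, ENNReal.ofReal (G m (j + j₁)) =
          ENNReal.ofReal (∑' j : ℕ, G m (j + j₁)) :=
        (ENNReal.ofReal_tsum_of_nonneg (fun j => hGnn m _)
          ((summable_nat_add_iff j₁).2 (hGsum m))).symm
      rw [h2] at h1
      exact ne_top_of_le_ne_top ENNReal.ofReal_ne_top h1
    have hBC := MeasureTheory.ae_eventually_notMem hsum_ne
    filter_upwards [hBC] with ω hω
    obtain ⟨N, hN⟩ := eventually_atTop.1 hω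
    rw [eventually_atTop]
    refine ⟨N + j₁, fun j hj => ?_⟩
    have h := hN (j - j₁) (by omega)
    have he : j - j₁ + j₁ = j := by omega
    rwa [he] at h
  have haeall : ∀ᵐ ω ∂P, ∀ m : ℕ, ∀ᶠ j in atTop, ω ∉ Ebad m j := ae_all_iff.2 hae
  -- (5) conclusion
  filter_upwards [haeall] with ω hω
  have hu0 : ∀ n, 0 ≤ Tsum γ n ω := by
    intro n
    apply Finset.sum_nonneg
    intro k _
    exact Set.indicator_nonneg (fun _ _ => zero_le_one) ω
  have humono : Monotone (fun n => Tsum γ n ω) := by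
    intro a c hac
    apply Finset.sum_le_sum_of_subset_of_nonneg (Finset.range_subset_range.2 hac)
    intro k _ _
    exact Set.indicator_nonneg (fun _ _ => zero_le_one) ω
  have hsubseq : Tendsto (fun j => Tsum γ (nseq δ j) ω / (nseq δ j : ℝ)) atTop (nhds b) := by
    have hdiff : Tendsto
        (fun j => (Tsum γ (nseq δ j) ω - Msum P γ (nseq δ j)) / (nseq δ j : ℝ))
        atTop (nhds 0) := by
      rw [Metric.tendsto_atTop]
      intro ε hε
      obtain ⟨m, hm⟩ := exists_nat_one_div_lt hε
      obtain ⟨N, hN⟩ := eventually_atTop.1 (hω m)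
      refine ⟨N, fun j hj => ?_⟩
      have h1 : ω ∉ Ebad m j := hN j hj
      simp only [hEbad_def, Set.mem_setOf_eq, not_le] at h1
      rw [Real.dist_eq, sub_zero, abs_div, abs_of_pos (nseq_pos_real δ j)]
      have hnp := nseq_pos_real δ j
      have h2 : |Tsum γ (nseq δ j) ω - Msum P γ (nseq δ j)| / (nseq δ j : ℝ) <
          ((m:ℝ)+1)⁻¹ := by
        rw [div_lt_iff₀ hnp]
        calc |Tsum γ (nseq δ j) ω - Msum P γ (nseq δ j)|
            < (nseq δ j : ℝ) * ((m:ℝ)+1)⁻¹ := h1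
          _ = ((m:ℝ)+1)⁻¹ * (nseq δ j : ℝ) := mul_comm _ _
      refine lt_trans h2 ?_
      rw [← one_div]
      exact hm
    have hMsub : Tendsto (fun j => Msum P γ (nseq δ j) / (nseq δ j : ℝ)) atTop (nhds b) :=
      hμ.comp (nseq_tendsto hδ0)
    have h := hdiff.add hMsub
    have heq2 : (fun j => (Tsum γ (nseq δ j) ω - Msum P γ (nseq δ j)) / (nseq δ j : ℝ) +
        Msum P γ (nseq δ j) / (nseq δ j : ℝ)) =
        fun j => Tsum γ (nseq δ j) ω / (nseq δ j : ℝ) := by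
      funext j
      rw [← add_div, sub_add_cancel]
    rw [heq2, zero_add] at h
    exact h
  have hfinal := bridge hδ0 hδ1 (fun n => Tsum γ n ω) hu0 humono b hsubseq
  have heq : (fun n : ℕ => (n : ℝ)⁻¹ *
      ∑ k ∈ Finset.range n, (Icc (0:ℝ) γ).indicator (fun _ => (1:ℝ)) (ω k))
      = fun n => Tsum γ n ω / (n:ℝ) := funext fun n => hsum_eq ω n
  rw [heq]
  exact hfinal

end
end

section
/- Suppose the sequence (T_n) satisfies hypotheses (NU1)–(NU5) of the nonstationary nonuniformly expanding setup, fix K_1, K_2 as in the regularity definition, set C_h = 2 e^{K_2 diam X}, and define h_n^k(ℓ) = C_h (h^k(n+ℓ) + h^{k+1}(n+ℓ−1) + ⋯ + h^{k+n}(ℓ)), where h^j(m) = m_j(τ_j ≥ m). Let k ≥ 1 and let μ be a probability measure on Y_k with |μ|_{LL,k} ≤ K_2. Then: (a) for every n ≥ 0, the measure (T_{k,k+n-1})_* μ is regular with tail bound (1/2) h_n^k with respect to T_{k+n}, T_{k+n+1}, …; and (b) there is a constant θ ∈ (0,1), depending only on K_1, K_2, diam X and δ_0, such that for every n ≥ n_0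 one may write (T_{k,k+n-1})_* μ = θ m_{k+n} + (1−θ) μ', where μ' is a regular probability measure with tail bound h_n^k with respect to T_{k+n}, T_{k+n+1}, …. -/
open MeasureTheory Set Filter
open scoped NNReal ENNReal

noncomputable section

/-- `seqComp T k n = T (k+n-1) ∘ ⋯ ∘ T (k+1) ∘ T k`, i.e. the composition `T_{k,k+n-1}`. -/
def seqComp {α : Type*} (T : ℕ → α → α) (k : ℕ) : ℕ → α → α
  | 0 => id
  | n + 1 => fun x => T (k + n) (seqComp T k n x)

/-- First return time: `τ_k(x) = inf {n ≥ 1 : T_{k,k+n-1}(x) ∈ Y_{k+n}}`. -/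
def retTime {α : Type*} (T : ℕ → α → α) (Y : ℕ → Set α) (k : ℕ) (x : α) : ℕ :=
  sInf {n | 1 ≤ n ∧ seqComp T k n x ∈ Y (k + n)}

/-- `|μ|_{LL} ≤ c`: the measure `μ` has a density `ρ` with respect to `m` whose logarithm is
`c`-Lipschitz on `Y` (equivalently, `ρ y ≤ ρ y' · exp (c · d(y,y'))` for all `y, y' ∈ Y`, which
also correctly encodes the conventions `log 0 = -∞` and `log 0 - log 0 = 0`). -/
def LLBoundedBy {X : Type*} [MetricSpace X] [MeasurableSpace X]
    (m : Measure X) (Y : Set X) (μ : Measure X) (c : ℝ) : Prop :=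
  ∃ ρ : X → ℝ, (∀ x, 0 ≤ ρ x) ∧ Measurable ρ ∧
    μ = m.withDensity (fun x => ENNReal.ofReal (ρ x)) ∧
    ∀ y ∈ Y, ∀ y' ∈ Y, ρ y ≤ ρ y' * Real.exp (c * dist y y')

/-- Nonstationary nonuniformly expanding setup: hypotheses (NU1)–(NU4).
All data is indexed by `k ≥ 1`; the values at `k = 0` are irrelevant. -/
structure NUE (X : Type*) [MetricSpace X] [MeasurableSpace X] [BorelSpace X] where
  /-- the expansion constant `λ > 1` -/
  lam : ℝ
  /-- the distortion constant `K > 0` -/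
  K : ℝ
  hlam : 1 < lam
  hK : 0 < K
  /-- `X` is a bounded metric space -/
  bounded : Bornology.IsBounded (univ : Set X)
  /-- the reference sets `Y k` -/
  Y : ℕ → Set X
  Ymeas : ∀ k, MeasurableSet (Y k)
  /-- the reference probability measures `m k`, with `m k (Y k) = 1` -/
  m : ℕ → Measure X
  mprob : ∀ k, IsProbabilityMeasure (m k)
  mY : ∀ k, 1 ≤ k → m k (Y k) = 1
  /-- the maps `T k` -/
  T : ℕ → X → X
  Tmeas : ∀ k, Measurable (T k)
  /-- the partitions `P k` of `X` -/
  P : ℕ → Set (Set X)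
  Pcount : ∀ k, (P k).Countable
  Pmeas : ∀ k, ∀ a ∈ P k, MeasurableSet a
  Pdisj : ∀ k, (P k).PairwiseDisjoint id
  Pcover : ∀ k, 1 ≤ k → ⋃₀ P k = univ
  /-- `Y k` is `P k`-measurable -/
  PY : ∀ k, 1 ≤ k → ∃ S ⊆ P k, Y k = ⋃₀ S
  /-- the return times take values in `{1, 2, …}` (finite returns) -/
  retFin : ∀ k, 1 ≤ k → ∀ x : X, 1 ≤ retTime T Y k x ∧
    seqComp T k (retTime T Y k x) x ∈ Y (k + retTime T Y k x)
  /-- (NU1) -/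
  nu1 : ∀ k, 1 ≤ k → ∀ a ∈ P k, a ⊆ Y k → 0 < m k a
  /-- (NU2) τ_k is constant on partition elements -/
  nu2 : ∀ k, 1 ≤ k → ∀ a ∈ P k, ∀ x ∈ a, ∀ x' ∈ a, retTime T Y k x = retTime T Y k x'
  /-- (NU3) the first return maps are expanding bijections with log-Lipschitz Jacobians -/
  nu3 : ∀ k, 1 ≤ k → ∀ a ∈ P k, a ⊆ Y k → ∀ n, (∀ x ∈ a, retTime T Y k x = n) →
    Set.BijOn (seqComp T k n) a (Y (k + n)) ∧
    (∀ y ∈ a, ∀ y' ∈ a, lam * dist y y' ≤ dist (seqComp T k n y) (seqComp T k n y')) ∧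
    LLBoundedBy (m (k + n)) (Y (k + n)) (Measure.map (seqComp T k n) ((m k).restrict a)) K
  /-- (NU4) bounded backward expansion -/
  nu4 : ∀ k, 1 ≤ k → ∀ a ∈ P k, ∀ n, (∀ x ∈ a, retTime T Y k x = n) →
    ∀ x ∈ a, ∀ x' ∈ a, ∀ j ≤ n,
      dist (seqComp T k j x) (seqComp T k j x') ≤
        K * dist (seqComp T k n x) (seqComp T k n x')

namespace NUE

variable {X : Type*} [MetricSpace X] [MeasurableSpace X] [BorelSpace X]

/-- the return time `τ_k` -/
def tau (S : NUE X) : ℕ → X → ℕ := retTime S.T S.Y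

/-- (NU5): `((T_{k,k+n-1})_* m_k)(Y_{k+n}) ≥ δ₀` for all `k ≥ 1` and `n ≥ n₀`. -/
def nu5 (S : NUE X) (δ₀ : ℝ) (n₀ : ℕ) : Prop :=
  ∀ k, 1 ≤ k → ∀ n, n₀ ≤ n →
    ENNReal.ofReal δ₀ ≤ Measure.map (seqComp S.T k n) (S.m k) (S.Y (k + n))

/-- `μ` is regular with respect to `T_k, T_{k+1}, …` (with constant `K₁`). -/
def Regular (S : NUE X) (K₁ : ℝ) (k : ℕ) (μ : Measure X) : Prop :=
  ∀ l, 1 ≤ l →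
    LLBoundedBy (S.m (k + l)) (S.Y (k + l))
      (Measure.map (seqComp S.T k l) (μ.restrict {x | S.tau k x = l})) K₁

/-- `μ` has tail bound `r` with respect to `T_k, T_{k+1}, …`. -/
def TailBound (S : NUE X) (k : ℕ) (μ : Measure X) (r : ℕ → ℝ) : Prop :=
  ∀ n : ℕ, μ {x | n ≤ S.tau k x} ≤ ENNReal.ofReal (r n)

/-- the tail function `h^k(n) = m_k(τ_k ≥ n)`. -/
def hTail (S : NUE X) (k n : ℕ) : ℝ := (S.m k {x | n ≤ S.tau k x}).toReal

/-- `h_n^k(ℓ) = C_h (h^k(n+ℓ) + h^{k+1}(n+ℓ-1) + ⋯ + h^{k+n}(ℓ))`. -/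
def hnk (S : NUE X) (Ch : ℝ) (k n l : ℕ) : ℝ :=
  Ch * ∑ i ∈ Finset.range (n + 1), S.hTail (k + i) (n + l - i)

end NUE
set_option linter.unusedSectionVars false

section Aux

open Classical

variable {X : Type*} [MetricSpace X] [MeasurableSpace X] [BorelSpace X]

theorem seqComp_measurable {T : ℕ → X → X} (hT : ∀ i, Measurable (T i)) (k n : ℕ) :
    Measurable (seqComp T k n) := by
  induction n with
  | zero => exact measurable_id
  | succ n ih => exact (hT (k + n)).comp ih

theorem seqComp_add (T : ℕ → X → X) (k m n : ℕ) (x : X) :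
    seqComp T k (m + n) x = seqComp T (k + m) n (seqComp T k m x) := by
  induction n with
  | zero => rfl
  | succ n ih =>
    show T (k + (m + n)) (seqComp T k (m + n) x) = T (k + m + n) (seqComp T (k + m) n _)
    rw [ih, Nat.add_assoc]

namespace NUE

variable (S : NUE X)

theorem nonemptyX (S : NUE X) : Nonempty X := by
  by_contra h
  have h1 : (S.m 0) Set.univ = 1 := (S.mprob 0).measure_univ
  rw [Set.univ_eq_empty_iff.mpr (not_nonempty_iff.mp h), measure_empty] at h1
  exact zero_ne_one h1

theorem tau_mem {k : ℕ} (hk : 1 ≤ k) (x : X) :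
    1 ≤ S.tau k x ∧ seqComp S.T k (S.tau k x) x ∈ S.Y (k + S.tau k x) :=
  S.retFin k hk x

theorem tau_pos {k : ℕ} (hk : 1 ≤ k) (x : X) : 1 ≤ S.tau k x := (S.tau_mem hk x).1

theorem tau_le_of_mem {k n : ℕ} {x : X} (hn : 1 ≤ n) (h : seqComp S.T k n x ∈ S.Y (k + n)) :
    S.tau k x ≤ n :=
  Nat.sInf_le ⟨hn, h⟩

theorem tau_shift {k : ℕ} (hk : 1 ≤ k) (s : ℕ) {x : X} (h : s < S.tau k x) :
    S.tau k x = s + S.tau (k + s) (seqComp S.T k s x) := by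
  set z := seqComp S.T k s x with hz
  have hmem := S.tau_mem hk x
  have hmem' := S.tau_mem (le_trans hk (Nat.le_add_right k s)) z
  have h1 : S.tau k x ≤ s + S.tau (k + s) z := by
    apply Nat.sInf_le
    refine ⟨le_trans hmem'.1 (Nat.le_add_left _ _), ?_⟩
    rw [seqComp_add S.T k s (S.tau (k + s) z) x, ← hz, ← Nat.add_assoc]
    exact hmem'.2
  have h2 : s + S.tau (k + s) z ≤ S.tau k x := by
    have h3 : S.tau (k + s) z ≤ S.tau k x - s := by
      apply Nat.sInf_le
      refine ⟨by omega, ?_⟩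
      have e1 : seqComp S.T (k + s) (S.tau k x - s) z = seqComp S.T k (S.tau k x) x := by
        rw [hz, ← seqComp_add S.T k s (S.tau k x - s) x]
        congr 1
        omega
      rw [e1]
      have e2 : k + s + (S.tau k x - s) = k + S.tau k x := by omega
      rw [e2]
      exact hmem.2
    omega
  omega

theorem not_mem_Y_of_lt_tau {k : ℕ} {s : ℕ} {x : X} (hs : 1 ≤ s) (h : s < S.tau k x) :
    seqComp S.T k s x ∉ S.Y (k + s) := by
  intro hmem
  exact absurd (S.tau_le_of_mem hs hmem) (by omega)

theorem measurableSet_entry (k i : ℕ) : MeasurableSet {x : X | seqComp S.T k i x ∈ S.Y (k + i)} :=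
  (seqComp_measurable S.Tmeas k i) (S.Ymeas (k + i))

theorem tau_ge_iff {k : ℕ} (hk : 1 ≤ k) (l : ℕ) (x : X) :
    l ≤ S.tau k x ↔ ∀ i, 1 ≤ i → i < l → seqComp S.T k i x ∉ S.Y (k + i) := by
  constructor
  · intro h i h1 h2 hmem
    exact absurd (S.tau_le_of_mem h1 hmem) (by omega)
  · intro h
    by_contra hlt
    push_neg at hlt
    have hm := S.tau_mem hk x
    exact h _ hm.1 (by omega) hm.2

theorem measurableSet_tauGe {k : ℕ} (hk : 1 ≤ k) (l : ℕ) :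
    MeasurableSet {x : X | l ≤ S.tau k x} := by
  have he : {x : X | l ≤ S.tau k x} =
      ⋂ i ∈ Finset.Ico 1 l, {x : X | seqComp S.T k i x ∈ S.Y (k + i)}ᶜ := by
    ext x
    simp only [Set.mem_setOf_eq, Set.mem_iInter, Set.mem_compl_iff, Finset.mem_Ico]
    rw [S.tau_ge_iff hk l x]
    constructor
    · intro h i hi; exact h i hi.1 hi.2
    · intro h i h1 h2; exact h i ⟨h1, h2⟩
  rw [he]
  exact MeasurableSet.biInter (Finset.Ico 1 l).countable_toSet
    (fun i _ => (S.measurableSet_entry k i).compl)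

theorem measurableSet_tauEq {k : ℕ} (hk : 1 ≤ k) (l : ℕ) :
    MeasurableSet {x : X | S.tau k x = l} := by
  have he : {x : X | S.tau k x = l} =
      {x : X | l ≤ S.tau k x} ∩ {x : X | l + 1 ≤ S.tau k x}ᶜ := by
    ext x
    simp only [Set.mem_setOf_eq, Set.mem_inter_iff, Set.mem_compl_iff]
    omega
  rw [he]
  exact (S.measurableSet_tauGe hk l).inter (S.measurableSet_tauGe hk (l + 1)).compl

theorem tauGe_zero {k : ℕ} (hk : 1 ≤ k) : {x : X | 0 < S.tau k x} = Set.univ :=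
  Set.eq_univ_of_forall fun x => S.tau_pos hk x

theorem tau_eq_decomp {κ : ℕ} (hκ : 1 ≤ κ) (s l : ℕ) (hl : 1 ≤ l) :
    (seqComp S.T κ s) ⁻¹' {z : X | S.tau (κ + s) z = l} ∩ {x : X | s < S.tau κ x} =
      {x : X | S.tau κ x = s + l} := by
  ext x
  simp only [Set.mem_inter_iff, Set.mem_preimage, Set.mem_setOf_eq]
  constructor
  · rintro ⟨h1, h2⟩
    rw [S.tau_shift hκ s h2, h1]
  · intro h
    have h2 : s < S.tau κ x := by omega
    have h3 := S.tau_shift hκ s h2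
    exact ⟨by omega, h2⟩

theorem tau_ge_decomp {κ : ℕ} (hκ : 1 ≤ κ) (s l : ℕ) (hl : 1 ≤ l) :
    (seqComp S.T κ s) ⁻¹' {z : X | l ≤ S.tau (κ + s) z} ∩ {x : X | s < S.tau κ x} =
      {x : X | s + l ≤ S.tau κ x} := by
  ext x
  simp only [Set.mem_inter_iff, Set.mem_preimage, Set.mem_setOf_eq]
  constructor
  · rintro ⟨h1, h2⟩
    rw [S.tau_shift hκ s h2]
    omega
  · intro h
    have h2 : s < S.tau κ x := by omega
    have h3 := S.tau_shift hκ s h2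
    exact ⟨by omega, h2⟩

theorem mYcompl {k : ℕ} (hk : 1 ≤ k) : S.m k (S.Y k)ᶜ = 0 := by
  have := S.mprob k
  rw [measure_compl (S.Ymeas k) (measure_ne_top _ _), S.mY k hk, measure_univ, tsub_self]

theorem pieceY {k : ℕ} (hk : 1 ≤ k) {a : Set X} (haP : a ∈ S.P k) :
    a ⊆ S.Y k ∨ a ∩ S.Y k = ∅ := by
  obtain ⟨Sp, hsub, hYeq⟩ := S.PY k hk
  by_cases hmem : a ∈ Sp
  · left; rw [hYeq]; exact fun x hx => ⟨a, hmem, hx⟩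
  · right
    rw [Set.eq_empty_iff_forall_notMem]
    rintro x ⟨hxa, hxY⟩
    rw [hYeq] at hxY
    obtain ⟨b, hb, hxb⟩ := hxY
    have hne : a ≠ b := fun h => hmem (h ▸ hb)
    exact Set.disjoint_left.mp (S.Pdisj k haP (hsub hb) hne) hxa hxb

end NUE

end Aux
section Aux2

open Classical

variable {X : Type*} [MetricSpace X] [MeasurableSpace X] [BorelSpace X]

theorem LL.mono {m : Measure X} {Y : Set X} {μ : Measure X} {c c' : ℝ}
    (h : LLBoundedBy m Y μ c) (hcc : c ≤ c') : LLBoundedBy m Y μ c' := by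
  obtain ⟨ρ, h0, hm, heq, hll⟩ := h
  refine ⟨ρ, h0, hm, heq, fun y hy y' hy' => (hll y hy y' hy').trans ?_⟩
  exact mul_le_mul_of_nonneg_left
    (Real.exp_le_exp.mpr (mul_le_mul_of_nonneg_right hcc dist_nonneg)) (h0 y')

theorem LL.zero {m : Measure X} {Y : Set X} {c : ℝ} : LLBoundedBy m Y (0 : Measure X) c := by
  refine ⟨fun _ => 0, fun _ => le_refl 0, measurable_const, ?_, ?_⟩
  · simp
  · intro y _ y' _; simp [le_refl, Real.exp_pos]

theorem LL.add {m : Measure X} {Y : Set X} {μ₁ μ₂ : Measure X} {c : ℝ}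
    (h₁ : LLBoundedBy m Y μ₁ c) (h₂ : LLBoundedBy m Y μ₂ c) : LLBoundedBy m Y (μ₁ + μ₂) c := by
  obtain ⟨ρ₁, h10, h1m, h1eq, h1ll⟩ := h₁
  obtain ⟨ρ₂, h20, h2m, h2eq, h2ll⟩ := h₂
  refine ⟨fun x => ρ₁ x + ρ₂ x, fun x => add_nonneg (h10 x) (h20 x), h1m.add h2m, ?_, ?_⟩
  · have : (fun x => ENNReal.ofReal (ρ₁ x + ρ₂ x)) =
        (fun x => ENNReal.ofReal (ρ₁ x)) + (fun x => ENNReal.ofReal (ρ₂ x)) := by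
      funext x
      simp [ENNReal.ofReal_add (h10 x) (h20 x)]
    rw [this, withDensity_add_left h1m.ennreal_ofReal, h1eq, h2eq]
  · intro y hy y' hy'
    have := add_le_add (h1ll y hy y' hy') (h2ll y hy y' hy')
    calc ρ₁ y + ρ₂ y ≤ ρ₁ y' * Real.exp (c * dist y y') + ρ₂ y' * Real.exp (c * dist y y') := this
    _ = (ρ₁ y' + ρ₂ y') * Real.exp (c * dist y y') := by ring

theorem LL.smul {m : Measure X} {Y : Set X} {μ : Measure X} {c : ℝ}
    (h : LLBoundedBy m Y μ c) (r : ℝ≥0∞) (hr : r ≠ ⊤) : LLBoundedBy m Y (r • μ) c := by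
  obtain ⟨ρ, h0, hm, heq, hll⟩ := h
  refine ⟨fun x => r.toReal * ρ x, fun x => mul_nonneg ENNReal.toReal_nonneg (h0 x),
    measurable_const.mul hm, ?_, ?_⟩
  · have : (fun x => ENNReal.ofReal (r.toReal * ρ x)) =
        r • (fun x => ENNReal.ofReal (ρ x)) := by
      funext x
      simp only [Pi.smul_apply, smul_eq_mul]
      rw [ENNReal.ofReal_mul ENNReal.toReal_nonneg, ENNReal.ofReal_toReal hr]
    rw [this, withDensity_smul r hm.ennreal_ofReal, heq]
  · intro y hy y' hy'
    have := mul_le_mul_of_nonneg_left (hll y hy y' hy') (ENNReal.toReal_nonneg (a := r))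
    calc r.toReal * ρ y ≤ r.toReal * (ρ y' * Real.exp (c * dist y y')) := this
    _ = r.toReal * ρ y' * Real.exp (c * dist y y') := by ring

theorem LL.finsetSum {m : Measure X} {Y : Set X} {c : ℝ} {ι : Type*} (s : Finset ι)
    (μs : ι → Measure X) (h : ∀ i ∈ s, LLBoundedBy m Y (μs i) c) :
    LLBoundedBy m Y (∑ i ∈ s, μs i) c := by
  classical
  induction s using Finset.induction with
  | empty => simpa using LL.zero
  | @insert a s' hni ih =>
    rw [Finset.sum_insert hni]
    exact LL.add (h a (Finset.mem_insert_self a s'))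
      (ih fun i hi => h i (Finset.mem_insert_of_mem hi))

/-- pointwise upper bound for an LL density -/
theorem ll_pointwise_upper {m : Measure X} {Y : Set X} {μ : Measure X} {c : ℝ} (hc : 0 ≤ c)
    (hYm : MeasurableSet Y) (hmY : m Y = 1)
    (hD : Bornology.IsBounded (Set.univ : Set X))
    {ρ : X → ℝ} (h0 : ∀ x, 0 ≤ ρ x) (hmeas : Measurable ρ)
    (heq : μ = m.withDensity (fun x => ENNReal.ofReal (ρ x)))
    (hll : ∀ y ∈ Y, ∀ y' ∈ Y, ρ y ≤ ρ y' * Real.exp (c * dist y y'))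
    {y : X} (hy : y ∈ Y) :
    ENNReal.ofReal (ρ y) ≤ μ Set.univ * ENNReal.ofReal (Real.exp (c * Metric.diam (Set.univ : Set X))) := by
  set E := Real.exp (c * Metric.diam (Set.univ : Set X)) with hE
  have hptw : ∀ y' ∈ Y, ENNReal.ofReal (ρ y) ≤ ENNReal.ofReal (ρ y') * ENNReal.ofReal E := by
    intro y' hy'
    rw [← ENNReal.ofReal_mul (h0 y')]
    apply ENNReal.ofReal_le_ofReal
    refine (hll y hy y' hy').trans (mul_le_mul_of_nonneg_left ?_ (h0 y'))
    exact Real.exp_le_exp.mpr (mul_le_mul_of_nonneg_left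
      (Metric.dist_le_diam_of_mem hD (Set.mem_univ _) (Set.mem_univ _)) hc)
  have h1 : ENNReal.ofReal (ρ y) = ∫⁻ _ in Y, ENNReal.ofReal (ρ y) ∂m := by
    rw [MeasureTheory.setLIntegral_const, hmY, mul_one]
  rw [h1]
  calc ∫⁻ _ in Y, ENNReal.ofReal (ρ y) ∂m
      ≤ ∫⁻ y' in Y, ENNReal.ofReal (ρ y') * ENNReal.ofReal E ∂m :=
        MeasureTheory.setLIntegral_mono (hmeas.ennreal_ofReal.mul measurable_const) hptw
    _ = (∫⁻ y' in Y, ENNReal.ofReal (ρ y') ∂m) * ENNReal.ofReal E := by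
        rw [MeasureTheory.lintegral_mul_const _ hmeas.ennreal_ofReal]
    _ = μ Y * ENNReal.ofReal E := by rw [heq, withDensity_apply _ hYm]
    _ ≤ μ Set.univ * ENNReal.ofReal E := by
        exact mul_le_mul_left (measure_mono (Set.subset_univ Y)) _

/-- pointwise lower bound for an LL density -/
theorem ll_pointwise_lower {m : Measure X} {Y : Set X} {μ : Measure X} {c : ℝ} (hc : 0 ≤ c)
    (hYm : MeasurableSet Y) (hmY : m Y = 1) (hcompl : m Yᶜ = 0)
    (hD : Bornology.IsBounded (Set.univ : Set X))
    {ρ : X → ℝ} (h0 : ∀ x, 0 ≤ ρ x) (hmeas : Measurable ρ)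
    (heq : μ = m.withDensity (fun x => ENNReal.ofReal (ρ x)))
    (hll : ∀ y ∈ Y, ∀ y' ∈ Y, ρ y ≤ ρ y' * Real.exp (c * dist y y'))
    {y : X} (hy : y ∈ Y) :
    μ Set.univ ≤ ENNReal.ofReal (ρ y) * ENNReal.ofReal (Real.exp (c * Metric.diam (Set.univ : Set X))) := by
  set E := Real.exp (c * Metric.diam (Set.univ : Set X)) with hE
  have hμcompl : μ Yᶜ = 0 := by
    rw [heq]; exact (withDensity_absolutelyContinuous m _) hcompl
  have huniv : μ Set.univ ≤ μ Y := by
    calc μ Set.univ = μ (Y ∪ Yᶜ) := by rw [Set.union_compl_self]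
    _ ≤ μ Y + μ Yᶜ := measure_union_le _ _
    _ = μ Y := by rw [hμcompl, add_zero]
  refine huniv.trans ?_
  have hptw : ∀ y' ∈ Y, ENNReal.ofReal (ρ y') ≤ ENNReal.ofReal (ρ y) * ENNReal.ofReal E := by
    intro y' hy'
    rw [← ENNReal.ofReal_mul (h0 y)]
    apply ENNReal.ofReal_le_ofReal
    refine (hll y' hy' y hy).trans (mul_le_mul_of_nonneg_left ?_ (h0 y))
    exact Real.exp_le_exp.mpr (mul_le_mul_of_nonneg_left
      (Metric.dist_le_diam_of_mem hD (Set.mem_univ _) (Set.mem_univ _)) hc)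
  calc μ Y = ∫⁻ y' in Y, ENNReal.ofReal (ρ y') ∂m := by rw [heq, withDensity_apply _ hYm]
    _ ≤ ∫⁻ _ in Y, ENNReal.ofReal (ρ y) * ENNReal.ofReal E ∂m :=
        MeasureTheory.setLIntegral_mono measurable_const hptw
    _ = ENNReal.ofReal (ρ y) * ENNReal.ofReal E := by
        rw [MeasureTheory.setLIntegral_const, hmY, mul_one]

/-- measure-level upper bound: `μ B ≤ (μ univ) e^{c diam} m B`. -/
theorem ll_measure_upper {m : Measure X} {Y : Set X} {μ : Measure X} {c : ℝ} (hc : 0 ≤ c)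
    (hYm : MeasurableSet Y) (hmY : m Y = 1) (hcompl : m Yᶜ = 0)
    (hD : Bornology.IsBounded (Set.univ : Set X))
    (hLL : LLBoundedBy m Y μ c)
    {B : Set X} (hB : MeasurableSet B) :
    μ B ≤ μ Set.univ * ENNReal.ofReal (Real.exp (c * Metric.diam (Set.univ : Set X))) * m B := by
  obtain ⟨ρ, h0, hmeas, heq, hll⟩ := hLL
  set E := Real.exp (c * Metric.diam (Set.univ : Set X)) with hE
  have hμcompl : μ Yᶜ = 0 := by
    rw [heq]; exact (withDensity_absolutelyContinuous m _) hcompl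
  have h1 : μ B ≤ μ (B ∩ Y) := by
    calc μ B = μ ((B ∩ Y) ∪ (B ∩ Yᶜ)) := by rw [Set.inter_union_compl]
    _ ≤ μ (B ∩ Y) + μ (B ∩ Yᶜ) := measure_union_le _ _
    _ = μ (B ∩ Y) := by
        rw [measure_mono_null (Set.inter_subset_right) hμcompl, add_zero]
  refine h1.trans ?_
  calc μ (B ∩ Y) = ∫⁻ y' in B ∩ Y, ENNReal.ofReal (ρ y') ∂m := by
        rw [heq, withDensity_apply _ (hB.inter hYm)]
    _ ≤ ∫⁻ _ in B ∩ Y, μ Set.univ * ENNReal.ofReal E ∂m := by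
        refine MeasureTheory.setLIntegral_mono measurable_const (fun y' hy' => ?_)
        exact ll_pointwise_upper hc hYm hmY hD h0 hmeas heq hll hy'.2
    _ = μ Set.univ * ENNReal.ofReal E * m (B ∩ Y) := by
        rw [MeasureTheory.setLIntegral_const]
    _ ≤ μ Set.univ * ENNReal.ofReal E * m B :=
        mul_le_mul_right (measure_mono Set.inter_subset_left) _

/-- measure-level lower bound: `(μ univ) e^{-c diam} m B ≤ μ B`. -/
theorem ll_measure_lower {m : Measure X} {Y : Set X} {μ : Measure X} {c : ℝ} (hc : 0 ≤ c)
    (hYm : MeasurableSet Y) (hmY : m Y = 1) (hcompl : m Yᶜ = 0)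
    (hD : Bornology.IsBounded (Set.univ : Set X))
    (hLL : LLBoundedBy m Y μ c)
    {B : Set X} (hB : MeasurableSet B) :
    μ Set.univ * ENNReal.ofReal (Real.exp (-(c * Metric.diam (Set.univ : Set X)))) * m B ≤ μ B := by
  obtain ⟨ρ, h0, hmeas, heq, hll⟩ := hLL
  set D := Metric.diam (Set.univ : Set X) with hDdef
  have hmB : m B = m (B ∩ Y) := by
    have h0' := measure_mono_null (Set.inter_subset_right (s := B) (t := Yᶜ)) hcompl
    refine le_antisymm ?_ (measure_mono Set.inter_subset_left)
    calc m B = m ((B ∩ Y) ∪ (B ∩ Yᶜ)) := by rw [Set.inter_union_compl]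
    _ ≤ m (B ∩ Y) + m (B ∩ Yᶜ) := measure_union_le _ _
    _ = m (B ∩ Y) := by rw [h0', add_zero]
  have hptw : ∀ y ∈ Y, μ Set.univ * ENNReal.ofReal (Real.exp (-(c * D))) ≤ ENNReal.ofReal (ρ y) := by
    intro y hy
    have h1 := ll_pointwise_lower hc hYm hmY hcompl hD h0 hmeas heq hll hy
    calc μ Set.univ * ENNReal.ofReal (Real.exp (-(c * D)))
        ≤ ENNReal.ofReal (ρ y) * ENNReal.ofReal (Real.exp (c * D)) *
            ENNReal.ofReal (Real.exp (-(c * D))) := mul_le_mul_left h1 _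
      _ = ENNReal.ofReal (ρ y) *
          (ENNReal.ofReal (Real.exp (c * D)) * ENNReal.ofReal (Real.exp (-(c * D)))) := by ring
      _ = ENNReal.ofReal (ρ y) := by
          rw [← ENNReal.ofReal_mul (Real.exp_nonneg _), ← Real.exp_add]
          norm_num
  calc μ Set.univ * ENNReal.ofReal (Real.exp (-(c * D))) * m B
      = ∫⁻ _ in B ∩ Y, μ Set.univ * ENNReal.ofReal (Real.exp (-(c * D))) ∂m := by
        rw [MeasureTheory.setLIntegral_const, hmB]
    _ ≤ ∫⁻ y in B ∩ Y, ENNReal.ofReal (ρ y) ∂m :=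
        MeasureTheory.setLIntegral_mono hmeas.ennreal_ofReal (fun y hy => hptw y hy.2)
    _ = μ (B ∩ Y) := by rw [heq, withDensity_apply _ (hB.inter hYm)]
    _ ≤ μ B := measure_mono Set.inter_subset_left

end Aux2
section Aux3

open Classical

variable {X : Type*} [MetricSpace X] [MeasurableSpace X] [BorelSpace X]

theorem LL.sum {ι : Type*} [Countable ι] {m : Measure X} {Y : Set X}
    (hYm : MeasurableSet Y) (hmY : m Y = 1) (hcompl : m Yᶜ = 0)
    (hD : Bornology.IsBounded (Set.univ : Set X)) {c : ℝ} (hc : 0 ≤ c)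
    (ν : ι → Measure X) (h : ∀ i, LLBoundedBy m Y (ν i) c)
    (hfin : Measure.sum ν Set.univ ≠ ⊤) :
    LLBoundedBy m Y (Measure.sum ν) c := by
  choose ρ h0 hmeas heq hll using h
  set E := Real.exp (c * Metric.diam (Set.univ : Set X)) with hE
  set g : X → ℝ≥0∞ := fun x => ∑' i, ENNReal.ofReal (ρ i x) with hg
  have hgm : Measurable g := Measurable.ennreal_tsum (fun i => (hmeas i).ennreal_ofReal)
  have hgY : ∀ y ∈ Y, g y ≤ Measure.sum ν Set.univ * ENNReal.ofReal E := by
    intro y hy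
    calc g y ≤ ∑' i, (ν i Set.univ * ENNReal.ofReal E) :=
        ENNReal.tsum_le_tsum (fun i =>
          ll_pointwise_upper hc hYm hmY hD (h0 i) (hmeas i) (heq i) (hll i) hy)
      _ = (∑' i, ν i Set.univ) * ENNReal.ofReal E := ENNReal.tsum_mul_right
      _ = Measure.sum ν Set.univ * ENNReal.ofReal E := by
          rw [Measure.sum_apply _ MeasurableSet.univ]
  have hgfin : ∀ y ∈ Y, g y ≠ ⊤ := fun y hy =>
    ne_top_of_le_ne_top (ENNReal.mul_ne_top hfin ENNReal.ofReal_ne_top) (hgY y hy)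
  refine ⟨fun x => (g x).toReal, fun x => ENNReal.toReal_nonneg, hgm.ennreal_toReal, ?_, ?_⟩
  · ext B hB
    rw [Measure.sum_apply _ hB, withDensity_apply _ hB]
    have e1 : ∀ i, ν i B = ∫⁻ x in B, ENNReal.ofReal (ρ i x) ∂m := fun i => by
      rw [heq i, withDensity_apply _ hB]
    simp_rw [e1]
    rw [← MeasureTheory.lintegral_tsum (fun i => ((hmeas i).ennreal_ofReal).aemeasurable)]
    refine MeasureTheory.lintegral_congr_ae ?_
    have hsub : {x : X | ¬ g x = ENNReal.ofReal ((g x).toReal)} ⊆ Yᶜ := by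
      intro x hx
      by_contra hxY
      rw [Set.notMem_compl_iff] at hxY
      exact hx (ENNReal.ofReal_toReal (hgfin x hxY)).symm
    have : (m.restrict B) {x : X | ¬ g x = ENNReal.ofReal ((g x).toReal)} = 0 :=
      measure_mono_null hsub (le_antisymm
        (le_trans (Measure.restrict_le_self _) hcompl.le) zero_le)
    exact this
  · intro y hy y' hy'
    have key1 : g y ≤ ∑' i, ENNReal.ofReal (ρ i y') * ENNReal.ofReal (Real.exp (c * dist y y')) := by
      refine ENNReal.tsum_le_tsum (fun i => ?_)
      rw [← ENNReal.ofReal_mul (h0 i y')]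
      exact ENNReal.ofReal_le_ofReal (hll i y hy y' hy')
    have key : g y ≤ g y' * ENNReal.ofReal (Real.exp (c * dist y y')) :=
      key1.trans (le_of_eq ENNReal.tsum_mul_right)
    have h2 : g y' * ENNReal.ofReal (Real.exp (c * dist y y')) ≠ ⊤ :=
      ENNReal.mul_ne_top (hgfin y' hy') ENNReal.ofReal_ne_top
    show (g y).toReal ≤ (g y').toReal * Real.exp (c * dist y y')
    calc (g y).toReal ≤ (g y' * ENNReal.ofReal (Real.exp (c * dist y y'))).toReal :=
        ENNReal.toReal_mono h2 key
      _ = (g y').toReal * Real.exp (c * dist y y') := by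
        rw [ENNReal.toReal_mul, ENNReal.toReal_ofReal (Real.exp_nonneg _)]

end Aux3
section Aux4

open Classical

variable {X : Type*} [MetricSpace X] [MeasurableSpace X] [BorelSpace X]

namespace NUE

/-- The key one-piece lemma: pushing a density through a full branch of the return map. -/
theorem piece (S : NUE X) {κ : ℕ} (hκ : 1 ≤ κ) {a : Set X} (haP : a ∈ S.P κ) (haY : a ⊆ S.Y κ)
    {l : ℕ} (hτ : ∀ x ∈ a, S.tau κ x = l) {c : ℝ} (hc : 0 ≤ c)
    {ρ : X → ℝ} (h0 : ∀ x, 0 ≤ ρ x) (hρm : Measurable ρ)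
    (hll : ∀ y ∈ S.Y κ, ∀ y' ∈ S.Y κ, ρ y ≤ ρ y' * Real.exp (c * dist y y')) :
    LLBoundedBy (S.m (κ + l)) (S.Y (κ + l))
      (Measure.map (seqComp S.T κ l)
        (((S.m κ).restrict a).withDensity (fun x => ENNReal.ofReal (ρ x))))
      (S.K + S.lam⁻¹ * c) := by
  haveI : Nonempty X := S.nonemptyX
  obtain ⟨hbij, hexp, hjac⟩ := S.nu3 κ hκ a haP haY l hτ
  obtain ⟨ζ, hζ0, hζm, hζeq, hζll⟩ := hjac
  set F := seqComp S.T κ l with hF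
  have hFm : Measurable F := seqComp_measurable S.Tmeas κ l
  have hInv := hbij.invOn_invFunOn
  set g0 := Function.invFunOn F a with hg0
  have hg0maps : Set.MapsTo g0 (S.Y (κ + l)) a := hbij.surjOn.mapsTo_invFunOn
  have hlam0 : 0 < S.lam := lt_trans one_pos S.hlam
  -- g0 is Lipschitz on Y (κ+l)
  have hg0lip : ∀ z ∈ S.Y (κ + l), ∀ z' ∈ S.Y (κ + l),
      dist (g0 z) (g0 z') ≤ S.lam⁻¹ * dist z z' := by
    intro z hz z' hz'
    have h1 : S.lam * dist (g0 z) (g0 z') ≤ dist (F (g0 z)) (F (g0 z')) :=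
      hexp _ (hg0maps hz) _ (hg0maps hz')
    rw [hInv.2 hz, hInv.2 hz'] at h1
    rw [inv_mul_eq_div, le_div_iff₀ hlam0, mul_comm]
    exact h1
  have hg0cont : ContinuousOn g0 (S.Y (κ + l)) := by
    have : LipschitzOnWith (Real.toNNReal S.lam⁻¹) g0 (S.Y (κ + l)) := by
      rw [lipschitzOnWith_iff_dist_le_mul]
      intro x hx y hy
      refine (hg0lip x hx y hy).trans ?_
      exact mul_le_mul_of_nonneg_right (Real.le_coe_toNNReal _) dist_nonneg
    exact this.continuousOn
  set x₀ : X := Classical.arbitrary X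
  set g : X → X := (S.Y (κ + l)).piecewise g0 (fun _ => x₀) with hgdef
  have hgm : Measurable g :=
    ContinuousOn.measurable_piecewise hg0cont continuousOn_const (S.Ymeas (κ + l))
  have hgY : ∀ z ∈ S.Y (κ + l), g z = g0 z := fun z hz => Set.piecewise_eq_of_mem _ _ _ hz
  have haM : MeasurableSet a := S.Pmeas κ a haP
  -- the density of the pushforward
  set ρ' : X → ℝ := fun z => ρ (g z) * ζ z with hρ'
  refine ⟨ρ', fun z => mul_nonneg (h0 _) (hζ0 z), (hρm.comp hgm).mul hζm, ?_, ?_⟩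
  · ext B hB
    rw [Measure.map_apply hFm hB, withDensity_apply _ (hFm hB), withDensity_apply _ hB,
      Measure.restrict_restrict (hFm hB)]
    -- RHS computation
    have e0 : ∀ z, ENNReal.ofReal (ρ' z) = ENNReal.ofReal (ρ (g z)) * ENNReal.ofReal (ζ z) :=
      fun z => ENNReal.ofReal_mul (h0 _)
    calc ∫⁻ x in F ⁻¹' B ∩ a, ENNReal.ofReal (ρ x) ∂(S.m κ)
        = ∫⁻ x in F ⁻¹' B ∩ a, ENNReal.ofReal (ρ (g (F x))) ∂(S.m κ) := by
          refine MeasureTheory.setLIntegral_congr_fun ((hFm hB).inter haM)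
            (fun x hx => ?_)
          rw [hgY _ (hbij.mapsTo hx.2), hInv.1 hx.2]
      _ = ∫⁻ x in F ⁻¹' B, ENNReal.ofReal (ρ (g (F x))) ∂((S.m κ).restrict a) := by
          rw [Measure.restrict_restrict (hFm hB)]
      _ = ∫⁻ z in B, ENNReal.ofReal (ρ (g z)) ∂(Measure.map F ((S.m κ).restrict a)) := by
          rw [MeasureTheory.setLIntegral_map hB
            (show Measurable fun z => ENNReal.ofReal (ρ (g z)) from (hρm.comp hgm).ennreal_ofReal)
            hFm]
      _ = ∫⁻ z in B, ENNReal.ofReal (ρ (g z)) ∂((S.m (κ + l)).withDensity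
            (fun x => ENNReal.ofReal (ζ x))) := by rw [← hζeq]
      _ = ∫⁻ z in B, (fun x => ENNReal.ofReal (ζ x)) z * ENNReal.ofReal (ρ (g z)) ∂(S.m (κ + l)) := by
          rw [MeasureTheory.setLIntegral_withDensity_eq_setLIntegral_mul _
            hζm.ennreal_ofReal
            (show Measurable fun z => ENNReal.ofReal (ρ (g z)) from (hρm.comp hgm).ennreal_ofReal)
            hB]
          rfl
      _ = ∫⁻ z in B, ENNReal.ofReal (ρ' z) ∂(S.m (κ + l)) := by
          refine MeasureTheory.setLIntegral_congr_fun hB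
            (fun z _ => ?_)
          rw [e0 z, mul_comm]
  · intro z hz z' hz'
    have hgza : g z ∈ a := hgY z hz ▸ hg0maps hz
    have hgz'a : g z' ∈ a := hgY z' hz' ▸ hg0maps hz'
    have h1 : ρ (g z) ≤ ρ (g z') * Real.exp (c * (S.lam⁻¹ * dist z z')) := by
      refine (hll _ (haY hgza) _ (haY hgz'a)).trans ?_
      refine mul_le_mul_of_nonneg_left ?_ (h0 _)
      refine Real.exp_le_exp.mpr (mul_le_mul_of_nonneg_left ?_ hc)
      rw [hgY z hz, hgY z' hz']
      exact hg0lip z hz z' hz'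
    have h2 : ζ z ≤ ζ z' * Real.exp (S.K * dist z z') := hζll z hz z' hz'
    have := mul_le_mul h1 h2 (hζ0 z) (mul_nonneg (h0 _) (Real.exp_nonneg _))
    calc ρ' z ≤ ρ (g z') * Real.exp (c * (S.lam⁻¹ * dist z z')) *
        (ζ z' * Real.exp (S.K * dist z z')) := this
      _ = ρ' z' * (Real.exp (c * (S.lam⁻¹ * dist z z')) * Real.exp (S.K * dist z z')) := by
          rw [hρ']; ring
      _ = ρ' z' * Real.exp ((S.K + S.lam⁻¹ * c) * dist z z') := by
          rw [← Real.exp_add]; ring_nf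

theorem map_measureSum {ι : Type*} [Countable ι] {f : X → X} (hf : Measurable f)
    (ν : ι → Measure X) :
    Measure.map f (Measure.sum ν) = Measure.sum (fun i => Measure.map f (ν i)) := by
  ext B hB
  rw [Measure.map_apply hf hB, Measure.sum_apply _ (hf hB), Measure.sum_apply _ hB]
  exact tsum_congr fun i => (Measure.map_apply hf hB).symm

/-- The one-step lemma: pushing an LL-bounded measure restricted to `{τ = l}`
through `l` steps gives an LL-bounded measure with constant `K + λ⁻¹ c`. -/
theorem step (S : NUE X) {κ : ℕ} (hκ : 1 ≤ κ) {c : ℝ} (hc : 0 ≤ c) {ν : Measure X}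
    (hLL : LLBoundedBy (S.m κ) (S.Y κ) ν c) (hfin : ν Set.univ ≠ ⊤) {l : ℕ} (hl : 1 ≤ l) :
    LLBoundedBy (S.m (κ + l)) (S.Y (κ + l))
      (Measure.map (seqComp S.T κ l) (ν.restrict {x | S.tau κ x = l})) (S.K + S.lam⁻¹ * c) := by
  obtain ⟨ρ, h0, hρm, heq, hll⟩ := hLL
  have hνcompl : ν (S.Y κ)ᶜ = 0 := by
    rw [heq]; exact (withDensity_absolutelyContinuous _ _) (S.mYcompl hκ)
  have hτm : MeasurableSet {x : X | S.tau κ x = l} := S.measurableSet_tauEq hκ l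
  -- restrict to {τ = l} ∩ Y
  set A : Set (Set X) := {a | a ∈ S.P κ ∧ a ⊆ S.Y κ ∧ a ⊆ {x | S.tau κ x = l}} with hA
  have hAcount : A.Countable := (S.Pcount κ).mono (fun a ha => ha.1)
  haveI := hAcount.to_subtype
  have hAm : ∀ i : A, MeasurableSet (i : Set X) := fun i => S.Pmeas κ i i.2.1
  have hAdisj : Pairwise (Function.onFun Disjoint (fun i : A => (i : Set X))) := by
    intro i j hij
    exact S.Pdisj κ i.2.1 j.2.1 (fun h => hij (Subtype.coe_injective h))
  have hseteq : {x : X | S.tau κ x = l} ∩ S.Y κ = ⋃ i : A, (i : Set X) := by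
    ext x
    constructor
    · rintro ⟨hxτ, hxY⟩
      have hxcov : x ∈ ⋃₀ S.P κ := by rw [S.Pcover κ hκ]; exact Set.mem_univ x
      obtain ⟨a, haP, hxa⟩ := hxcov
      have haY : a ⊆ S.Y κ := by
        rcases S.pieceY hκ haP with h | h
        · exact h
        · exact absurd (Set.eq_empty_iff_forall_notMem.mp h x ⟨hxa, hxY⟩) (fun h2 => h2)
      have haτ : a ⊆ {x : X | S.tau κ x = l} := by
        intro x' hx'
        have := S.nu2 κ hκ a haP x' hx' x hxa
        exact this.trans hxτ
      exact Set.mem_iUnion.mpr ⟨⟨a, haP, haY, haτ⟩, hxa⟩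
    · intro hx
      obtain ⟨i, hxi⟩ := Set.mem_iUnion.mp hx
      exact ⟨i.2.2.2 hxi, i.2.2.1 hxi⟩
  have hrestr : ν.restrict {x : X | S.tau κ x = l} =
      Measure.sum (fun i : A => ν.restrict (i : Set X)) := by
    rw [← Measure.restrict_iUnion hAdisj hAm, ← hseteq]
    refine Measure.restrict_congr_set (MeasureTheory.ae_eq_set.mpr ⟨?_, ?_⟩)
    · refine measure_mono_null (fun x hx => ?_) hνcompl
      exact fun hxY => hx.2 ⟨hx.1, hxY⟩
    · rw [Set.diff_eq_empty.mpr Set.inter_subset_left, measure_empty]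
  have hFm : Measurable (seqComp S.T κ l) := seqComp_measurable S.Tmeas κ l
  rw [hrestr, map_measureSum hFm]
  have hmass : Measure.sum (fun i : A => Measure.map (seqComp S.T κ l)
      (ν.restrict (i : Set X))) Set.univ ≠ ⊤ := by
    rw [← map_measureSum hFm, ← hrestr, Measure.map_apply hFm MeasurableSet.univ,
      Set.preimage_univ, Measure.restrict_apply MeasurableSet.univ, Set.univ_inter]
    exact ne_top_of_le_ne_top hfin (measure_mono (Set.subset_univ _))
  refine LL.sum (S.Ymeas (κ + l)) (S.mY (κ + l) (by omega)) (S.mYcompl (by omega)) S.bounded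
    (add_nonneg S.hK.le (mul_nonneg (inv_nonneg.mpr (le_of_lt (lt_trans one_pos S.hlam))) hc))
    _ (fun i => ?_) hmass
  have hi : ν.restrict (i : Set X) =
      ((S.m κ).restrict (i : Set X)).withDensity (fun x => ENNReal.ofReal (ρ x)) := by
    rw [heq, restrict_withDensity (hAm i)]
  rw [hi]
  exact S.piece hκ i.2.1 i.2.2.1 (fun x hx => i.2.2.2 hx) hc h0 hρm hll

end NUE

end Aux4
section Aux5

open Classical

variable {X : Type*} [MetricSpace X] [MeasurableSpace X] [BorelSpace X]

namespace NUE

/-- `gammaM S k μ j` is the part of the evolved measure that "arrives in `Y (k+j)`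
at time exactly `k + j`" (for `j ≥ 1`); `gammaM S k μ 0 = μ`. -/
noncomputable def gammaM (S : NUE X) (k : ℕ) (μ : Measure X) : ℕ → Measure X
  | 0 => μ
  | (j + 1) => ∑ i ∈ (Finset.range (j + 1)).attach,
      Measure.map (seqComp S.T (k + i.1) (j + 1 - i.1))
        ((gammaM S k μ i.1).restrict {x | S.tau (k + i.1) x = j + 1 - i.1})
  decreasing_by exact Nat.lt_succ_of_le (Nat.le_of_lt_succ (Finset.mem_range.mp i.2))

theorem gammaM_zero (S : NUE X) (k : ℕ) (μ : Measure X) : gammaM S k μ 0 = μ := by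
  rw [gammaM]

theorem gammaM_succ (S : NUE X) (k : ℕ) (μ : Measure X) (j : ℕ) :
    gammaM S k μ (j + 1) = ∑ i ∈ Finset.range (j + 1),
      Measure.map (seqComp S.T (k + i) (j + 1 - i))
        ((gammaM S k μ i).restrict {x | S.tau (k + i) x = j + 1 - i}) := by
  rw [gammaM]
  exact Finset.sum_attach (Finset.range (j + 1)) (fun i => Measure.map (seqComp S.T (k + i) (j + 1 - i))
    ((gammaM S k μ i).restrict {x | S.tau (k + i) x = j + 1 - i}))

theorem map_finsetSum {ι : Type*} {f : X → X} (hf : Measurable f) (s : Finset ι)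
    (ν : ι → Measure X) :
    Measure.map f (∑ i ∈ s, ν i) = ∑ i ∈ s, Measure.map f (ν i) := by
  classical
  induction s using Finset.induction with
  | empty => simp
  | @insert a s' hni ih =>
    rw [Finset.sum_insert hni, Finset.sum_insert hni, Measure.map_add _ _ hf, ih]

theorem restrict_finsetSum {ι : Type*} {B : Set X} (s : Finset ι)
    (ν : ι → Measure X) :
    (∑ i ∈ s, ν i).restrict B = ∑ i ∈ s, (ν i).restrict B := by
  classical
  induction s using Finset.induction with
  | empty => simp
  | @insert a s' hni ih =>
    rw [Finset.sum_insert hni, Finset.sum_insert hni, Measure.restrict_add, ih]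

/-- Master decomposition of the evolved measure by the time of last visit to the
reference sets. -/
theorem master (S : NUE X) {k : ℕ} (hk : 1 ≤ k) (μ : Measure X) (n : ℕ) :
    Measure.map (seqComp S.T k n) μ = ∑ j ∈ Finset.range (n + 1),
      Measure.map (seqComp S.T (k + j) (n - j))
        ((gammaM S k μ j).restrict {x | n - j < S.tau (k + j) x}) := by
  induction n with
  | zero =>
    have h1 : {x : X | 0 - 0 < S.tau (k + 0) x} = Set.univ :=
      Set.eq_univ_of_forall fun x => by
        have := S.tau_pos (show 1 ≤ k + 0 by omega) x
        simp only [Set.mem_setOf_eq]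
        omega
    rw [Finset.sum_range_one, h1, Measure.restrict_univ, gammaM_zero]
    rfl
  | succ n ih =>
    have hstep : Measure.map (seqComp S.T k (n + 1)) μ =
        Measure.map (S.T (k + n)) (Measure.map (seqComp S.T k n) μ) := by
      rw [Measure.map_map (S.Tmeas (k + n)) (seqComp_measurable S.Tmeas k n)]
      rfl
    rw [hstep, ih, map_finsetSum (S.Tmeas (k + n))]
    have hterm : ∀ j ∈ Finset.range (n + 1),
        Measure.map (S.T (k + n)) (Measure.map (seqComp S.T (k + j) (n - j))
          ((gammaM S k μ j).restrict {x | n - j < S.tau (k + j) x})) =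
        Measure.map (seqComp S.T (k + j) (n + 1 - j))
          ((gammaM S k μ j).restrict {x | S.tau (k + j) x = n + 1 - j}) +
        Measure.map (seqComp S.T (k + j) (n + 1 - j))
          ((gammaM S k μ j).restrict {x | n + 1 - j < S.tau (k + j) x}) := by
      intro j hj
      have hjn : j ≤ n := Nat.lt_succ_iff.mp (Finset.mem_range.mp hj)
      have hkj : 1 ≤ k + j := by omega
      have hcomp : S.T (k + n) ∘ seqComp S.T (k + j) (n - j) =
          seqComp S.T (k + j) (n + 1 - j) := by
        funext x
        have h1 : n + 1 - j = (n - j) + 1 := by omega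
        rw [h1]
        show S.T (k + n) (seqComp S.T (k + j) (n - j) x) =
          S.T (k + j + (n - j)) (seqComp S.T (k + j) (n - j) x)
        congr 1
        omega
      rw [Measure.map_map (S.Tmeas (k + n)) (seqComp_measurable S.Tmeas (k + j) (n - j)), hcomp]
      have hsplit : {x : X | n - j < S.tau (k + j) x} =
          {x : X | S.tau (k + j) x = n + 1 - j} ∪ {x : X | n + 1 - j < S.tau (k + j) x} := by
        ext x
        simp only [Set.mem_setOf_eq, Set.mem_union]
        omega
      have hdisj : Disjoint {x : X | S.tau (k + j) x = n + 1 - j}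
          {x : X | n + 1 - j < S.tau (k + j) x} := by
        rw [Set.disjoint_left]
        intro x h1 h2
        simp only [Set.mem_setOf_eq] at h1 h2
        omega
      have hm2 : MeasurableSet {x : X | n + 1 - j < S.tau (k + j) x} := by
        have : {x : X | n + 1 - j < S.tau (k + j) x} = {x : X | n + 2 - j ≤ S.tau (k + j) x} := by
          ext x; simp only [Set.mem_setOf_eq]; omega
        rw [this]
        exact S.measurableSet_tauGe hkj _
      rw [hsplit, Measure.restrict_union hdisj hm2,
        Measure.map_add _ _ (seqComp_measurable S.Tmeas (k + j) (n + 1 - j))]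
    rw [Finset.sum_congr rfl hterm, Finset.sum_add_distrib]
    have hlast : ∑ j ∈ Finset.range (n + 1),
        Measure.map (seqComp S.T (k + j) (n + 1 - j))
          ((gammaM S k μ j).restrict {x | S.tau (k + j) x = n + 1 - j}) =
        gammaM S k μ (n + 1) := (gammaM_succ S k μ n).symm
    rw [hlast, Finset.sum_range_succ (n := n + 1)]
    have hfinal : Measure.map (seqComp S.T (k + (n + 1)) (n + 1 - (n + 1)))
        ((gammaM S k μ (n + 1)).restrict {x | n + 1 - (n + 1) < S.tau (k + (n + 1)) x}) =
        gammaM S k μ (n + 1) := by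
      have h1 : {x : X | 0 < S.tau (k + (n + 1)) x} = Set.univ :=
        S.tauGe_zero (by omega)
      rw [Nat.sub_self, h1, Measure.restrict_univ]
      exact Measure.map_id
    rw [hfinal]
    exact add_comm _ _

theorem gammaM_mass (S : NUE X) {k : ℕ} (hk : 1 ≤ k) (μ : Measure X)
    [IsProbabilityMeasure μ] (j : ℕ) : gammaM S k μ j Set.univ ≤ 1 := by
  have hmap : Measure.map (seqComp S.T k j) μ Set.univ = 1 := by
    rw [Measure.map_apply (seqComp_measurable S.Tmeas k j) MeasurableSet.univ,
      Set.preimage_univ, measure_univ]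
  have := S.master hk μ j
  have happ := congrArg (fun ν : Measure X => ν Set.univ) this
  rw [hmap, Measure.finset_sum_apply] at happ
  -- the j-th term equals gammaM S k μ j univ
  have hjterm : Measure.map (seqComp S.T (k + j) (j - j))
      ((gammaM S k μ j).restrict {x | j - j < S.tau (k + j) x}) Set.univ =
      gammaM S k μ j Set.univ := by
    have h1 : {x : X | 0 < S.tau (k + j) x} = Set.univ :=
      S.tauGe_zero (by omega)
    rw [Nat.sub_self, h1, Measure.restrict_univ]
    show Measure.map id (gammaM S k μ j) Set.univ = _
    rw [Measure.map_id]
  calc gammaM S k μ j Set.univ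
      = Measure.map (seqComp S.T (k + j) (j - j))
          ((gammaM S k μ j).restrict {x | j - j < S.tau (k + j) x}) Set.univ := hjterm.symm
    _ ≤ ∑ i ∈ Finset.range (j + 1), Measure.map (seqComp S.T (k + i) (j - i))
          ((gammaM S k μ i).restrict {x | j - i < S.tau (k + i) x}) Set.univ := by
        exact Finset.single_le_sum (f := fun i => Measure.map (seqComp S.T (k + i) (j - i))
          ((gammaM S k μ i).restrict {x | j - i < S.tau (k + i) x}) Set.univ)
          (fun i _ => zero_le) (Finset.self_mem_range_succ j)
    _ = 1 := happ.symm

end NUE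

end Aux5
section Aux6

open Classical

variable {X : Type*} [MetricSpace X] [MeasurableSpace X] [BorelSpace X]

namespace NUE

theorem constants (S : NUE X) {K₁ K₂ : ℝ} (hK₂ : (1 - S.lam⁻¹)⁻¹ * S.K < K₂)
    (hK₁ : K₁ = S.K + S.lam⁻¹ * K₂) : 0 < K₁ ∧ K₁ < K₂ := by
  have hlam1 : 0 < S.lam := lt_trans one_pos S.hlam
  have hinv : 0 < S.lam⁻¹ := inv_pos.mpr hlam1
  have hinvlt : S.lam⁻¹ < 1 := by
    have h := inv_mul_cancel₀ (ne_of_gt hlam1)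
    nlinarith [S.hlam]
  have h1 : 0 < 1 - S.lam⁻¹ := by linarith
  have h2 : S.K < (1 - S.lam⁻¹) * K₂ := by
    have hc : (1 - S.lam⁻¹) * ((1 - S.lam⁻¹)⁻¹ * S.K) = S.K := by
      rw [← mul_assoc, mul_inv_cancel₀ (ne_of_gt h1), one_mul]
    calc S.K = (1 - S.lam⁻¹) * ((1 - S.lam⁻¹)⁻¹ * S.K) := hc.symm
    _ < (1 - S.lam⁻¹) * K₂ := mul_lt_mul_of_pos_left hK₂ h1
  have hK₂pos : 0 < K₂ := by
    by_contra hcon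
    push_neg at hcon
    nlinarith [S.hK, mul_nonpos_of_nonneg_of_nonpos h1.le hcon]
  constructor
  · rw [hK₁]; nlinarith [S.hK, mul_pos hinv hK₂pos]
  · rw [hK₁]; nlinarith

theorem gammaM_ll (S : NUE X) {K₁ K₂ : ℝ} (hK₂ : (1 - S.lam⁻¹)⁻¹ * S.K < K₂)
    (hK₁ : K₁ = S.K + S.lam⁻¹ * K₂) {k : ℕ} (hk : 1 ≤ k) (μ : Measure X)
    [IsProbabilityMeasure μ] (hμ : LLBoundedBy (S.m k) (S.Y k) μ K₂) :
    ∀ j, 1 ≤ j → LLBoundedBy (S.m (k + j)) (S.Y (k + j)) (gammaM S k μ j) K₁ := by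
  obtain ⟨hK₁pos, hK₁₂⟩ := S.constants hK₂ hK₁
  have hK₂0 : (0 : ℝ) ≤ K₂ := le_of_lt (lt_trans hK₁pos hK₁₂)
  intro j
  induction j using Nat.strong_induction_on with
  | _ j ih =>
    intro hj
    match j, hj with
    | (j' + 1), _ =>
      rw [gammaM_succ]
      refine LL.finsetSum _ _ (fun i hi => ?_)
      have hi' : i ≤ j' := Nat.lt_succ_iff.mp (Finset.mem_range.mp hi)
      have hci : LLBoundedBy (S.m (k + i)) (S.Y (k + i)) (gammaM S k μ i) K₂ := by
        rcases Nat.eq_zero_or_pos i with h0 | h0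
        · subst h0
          rw [gammaM_zero]
          exact hμ
        · exact LL.mono (ih i (by omega) h0) (le_of_lt hK₁₂)
      have hmass : gammaM S k μ i Set.univ ≠ ⊤ :=
        ne_top_of_le_ne_top ENNReal.one_ne_top (S.gammaM_mass hk μ i)
      have hstep := S.step (κ := k + i) (by omega) hK₂0 hci hmass
        (l := j' + 1 - i) (by omega)
      have he : k + i + (j' + 1 - i) = k + (j' + 1) := by omega
      rw [he, ← hK₁] at hstep
      exact hstep

theorem term_push (S : NUE X) {k : ℕ} (hk : 1 ≤ k) (μ : Measure X) {n j l : ℕ}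
    (hj : j ≤ n) (hl : 1 ≤ l) :
    Measure.map (seqComp S.T (k + n) l)
      ((Measure.map (seqComp S.T (k + j) (n - j))
        ((gammaM S k μ j).restrict {x | n - j < S.tau (k + j) x})).restrict
          {x | S.tau (k + n) x = l}) =
    Measure.map (seqComp S.T (k + j) (n - j + l))
      ((gammaM S k μ j).restrict {x | S.tau (k + j) x = n - j + l}) := by
  have hkj : 1 ≤ k + j := by omega
  have he : k + j + (n - j) = k + n := by omega
  have hFm1 : Measurable (seqComp S.T (k + j) (n - j)) := seqComp_measurable S.Tmeas _ _
  have hτm : MeasurableSet {x : X | S.tau (k + n) x = l} := S.measurableSet_tauEq (by omega) l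
  rw [Measure.restrict_map hFm1 hτm,
    Measure.map_map (seqComp_measurable S.Tmeas (k + n) l) hFm1,
    Measure.restrict_restrict (hFm1 hτm)]
  have hfe : seqComp S.T (k + n) l ∘ seqComp S.T (k + j) (n - j) =
      seqComp S.T (k + j) (n - j + l) := by
    funext x
    show seqComp S.T (k + n) l (seqComp S.T (k + j) (n - j) x) = _
    rw [seqComp_add S.T (k + j) (n - j) l x, he]
  have hse := S.tau_eq_decomp hkj (n - j) l hl
  rw [he] at hse
  rw [hfe, hse]

theorem regular_decomp (S : NUE X) {k : ℕ} (hk : 1 ≤ k) (μ : Measure X) (n l : ℕ)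
    (hl : 1 ≤ l) :
    Measure.map (seqComp S.T (k + n) l)
      ((Measure.map (seqComp S.T k n) μ).restrict {x | S.tau (k + n) x = l}) =
    ∑ j ∈ Finset.range (n + 1), Measure.map (seqComp S.T (k + j) (n - j + l))
      ((gammaM S k μ j).restrict {x | S.tau (k + j) x = n - j + l}) := by
  rw [master S hk μ n, restrict_finsetSum, map_finsetSum (seqComp_measurable S.Tmeas _ _)]
  exact Finset.sum_congr rfl (fun j hj =>
    term_push S hk μ (Nat.lt_succ_iff.mp (Finset.mem_range.mp hj)) hl)

theorem hTail_nonneg (S : NUE X) (k n : ℕ) : 0 ≤ S.hTail k n := ENNReal.toReal_nonneg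

/-- tail bound for the evolved measure (part (a) tail estimate). -/
theorem tail_bound_a (S : NUE X) {K₁ K₂ : ℝ} (hK₂ : (1 - S.lam⁻¹)⁻¹ * S.K < K₂)
    (hK₁ : K₁ = S.K + S.lam⁻¹ * K₂) {k : ℕ} (hk : 1 ≤ k) (μ : Measure X)
    [IsProbabilityMeasure μ] (hμ : LLBoundedBy (S.m k) (S.Y k) μ K₂)
    {Ch : ℝ} (hCh : Ch = 2 * Real.exp (K₂ * Metric.diam (Set.univ : Set X)))
    (n l : ℕ) :
    Measure.map (seqComp S.T k n) μ {x | l ≤ S.tau (k + n) x} ≤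
      ENNReal.ofReal (1 / 2 * S.hnk Ch k n l) := by
  obtain ⟨hK₁pos, hK₁₂⟩ := S.constants hK₂ hK₁
  have hK₂0 : (0 : ℝ) ≤ K₂ := le_of_lt (lt_trans hK₁pos hK₁₂)
  set D := Metric.diam (Set.univ : Set X) with hD
  have hD0 : 0 ≤ D := Metric.diam_nonneg
  have hE1 : 1 ≤ Real.exp (K₂ * D) := Real.one_le_exp (mul_nonneg hK₂0 hD0)
  have hhalf : 1 / 2 * S.hnk Ch k n l =
      ∑ j ∈ Finset.range (n + 1), Real.exp (K₂ * D) * S.hTail (k + j) (n + l - j) := by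
    rw [NUE.hnk, hCh, Finset.mul_sum, Finset.mul_sum]
    refine Finset.sum_congr rfl (fun j _ => ?_)
    ring
  rcases Nat.eq_zero_or_pos l with hl0 | hl1
  · -- l = 0 : the measure is at most 1 and the bound is at least 1
    subst hl0
    haveI := S.mprob (k + n)
    have hbound : Measure.map (seqComp S.T k n) μ {x | 0 ≤ S.tau (k + n) x} ≤ 1 := by
      refine le_trans (measure_mono (Set.subset_univ _)) ?_
      rw [Measure.map_apply (seqComp_measurable S.Tmeas k n) MeasurableSet.univ,
        Set.preimage_univ, measure_univ]
    refine hbound.trans ?_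
    rw [← ENNReal.ofReal_one]
    refine ENNReal.ofReal_le_ofReal ?_
    rw [hhalf]
    have hsingle : Real.exp (K₂ * D) * S.hTail (k + n) (n + 0 - n) ≤
        ∑ j ∈ Finset.range (n + 1), Real.exp (K₂ * D) * S.hTail (k + j) (n + 0 - j) :=
      Finset.single_le_sum (f := fun j => Real.exp (K₂ * D) * S.hTail (k + j) (n + 0 - j))
        (fun j _ => mul_nonneg (Real.exp_nonneg _) (S.hTail_nonneg _ _))
        (Finset.self_mem_range_succ n)
    have htail1 : S.hTail (k + n) (n + 0 - n) = 1 := by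
      have h1 : {x : X | n + 0 - n ≤ S.tau (k + n) x} = Set.univ :=
        Set.eq_univ_of_forall fun x => by simp
      rw [NUE.hTail, h1, measure_univ, ENNReal.toReal_one]
    nlinarith [hsingle, htail1]
  · -- l ≥ 1
    rw [master S hk μ n, Measure.finset_sum_apply]
    have hterm : ∀ j ∈ Finset.range (n + 1),
        Measure.map (seqComp S.T (k + j) (n - j))
          ((gammaM S k μ j).restrict {x | n - j < S.tau (k + j) x})
          {x | l ≤ S.tau (k + n) x} ≤
        ENNReal.ofReal (Real.exp (K₂ * D) * S.hTail (k + j) (n + l - j)) := by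
      intro j hj
      haveI := S.mprob (k + j)
      have hjn : j ≤ n := Nat.lt_succ_iff.mp (Finset.mem_range.mp hj)
      have hkj : 1 ≤ k + j := by omega
      have he : k + j + (n - j) = k + n := by omega
      have hτm : MeasurableSet {x : X | l ≤ S.tau (k + n) x} :=
        S.measurableSet_tauGe (by omega) l
      rw [Measure.map_apply (seqComp_measurable S.Tmeas _ _) hτm,
        Measure.restrict_apply (seqComp_measurable S.Tmeas _ _ hτm)]
      have hse := S.tau_ge_decomp hkj (n - j) l hl1
      rw [he] at hse
      rw [hse]
      -- now bound γ_j {x | (n-j)+l ≤ τ} via the LL density bound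
      have hγLL : LLBoundedBy (S.m (k + j)) (S.Y (k + j)) (gammaM S k μ j) K₂ := by
        rcases Nat.eq_zero_or_pos j with h0 | h0
        · subst h0; rw [gammaM_zero]; exact hμ
        · exact LL.mono (S.gammaM_ll hK₂ hK₁ hk μ hμ j h0) (le_of_lt hK₁₂)
      have hupper := ll_measure_upper hK₂0 (S.Ymeas (k + j)) (S.mY (k + j) (by omega))
        (S.mYcompl (by omega)) S.bounded hγLL
        (B := {x : X | n - j + l ≤ S.tau (k + j) x}) (S.measurableSet_tauGe (by omega) _)
      refine hupper.trans ?_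
      have hmass := S.gammaM_mass hk μ j
      have h2 : gammaM S k μ j Set.univ * ENNReal.ofReal (Real.exp (K₂ * D)) *
          S.m (k + j) {x | n - j + l ≤ S.tau (k + j) x} ≤
          ENNReal.ofReal (Real.exp (K₂ * D)) *
          S.m (k + j) {x | n - j + l ≤ S.tau (k + j) x} := by
        refine mul_le_mul_left (mul_le_of_le_one_left zero_le hmass |>.trans_eq ?_) _
        rfl
      refine h2.trans ?_
      have h3 : S.m (k + j) {x | n - j + l ≤ S.tau (k + j) x} =
          ENNReal.ofReal (S.hTail (k + j) (n + l - j)) := by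
        have he2 : n - j + l = n + l - j := by omega
        rw [NUE.hTail, ENNReal.ofReal_toReal (measure_ne_top _ _), he2]
      rw [h3, ← ENNReal.ofReal_mul (Real.exp_nonneg _)]
    calc ∑ j ∈ Finset.range (n + 1), Measure.map (seqComp S.T (k + j) (n - j))
          ((gammaM S k μ j).restrict {x | n - j < S.tau (k + j) x})
          {x | l ≤ S.tau (k + n) x}
        ≤ ∑ j ∈ Finset.range (n + 1),
            ENNReal.ofReal (Real.exp (K₂ * D) * S.hTail (k + j) (n + l - j)) :=
          Finset.sum_le_sum hterm
      _ = ENNReal.ofReal (∑ j ∈ Finset.range (n + 1),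
            Real.exp (K₂ * D) * S.hTail (k + j) (n + l - j)) := by
          rw [ENNReal.ofReal_sum_of_nonneg
            (fun j _ => mul_nonneg (Real.exp_nonneg _) (S.hTail_nonneg _ _))]
      _ = ENNReal.ofReal (1 / 2 * S.hnk Ch k n l) := by rw [hhalf]

end NUE

end Aux6
section Final

open Classical

set_option maxHeartbeats 2000000 in
theorem stmt17 {X : Type*} [MetricSpace X] [MeasurableSpace X] [BorelSpace X]
    (S : NUE X) (δ₀ : ℝ) (n₀ : ℕ) (hδ₀ : 0 < δ₀) (hn₀ : 1 ≤ n₀) (h5 : S.nu5 δ₀ n₀)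
    (K₂ : ℝ) (hK₂ : (1 - S.lam⁻¹)⁻¹ * S.K < K₂)
    (K₁ : ℝ) (hK₁ : K₁ = S.K + S.lam⁻¹ * K₂)
    (Ch : ℝ) (hCh : Ch = 2 * Real.exp (K₂ * Metric.diam (univ : Set X))) :
    -- (a)
    (∀ k, 1 ≤ k → ∀ μ : Measure X, IsProbabilityMeasure μ →
      LLBoundedBy (S.m k) (S.Y k) μ K₂ → ∀ n : ℕ,
        S.Regular K₁ (k + n) (Measure.map (seqComp S.T k n) μ) ∧
        S.TailBound (k + n) (Measure.map (seqComp S.T k n) μ)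
          (fun l => (1 / 2) * S.hnk Ch k n l)) ∧
    -- (b)
    (∃ θ ∈ Ioo (0:ℝ) 1,
      ∀ k, 1 ≤ k → ∀ μ : Measure X, IsProbabilityMeasure μ →
        LLBoundedBy (S.m k) (S.Y k) μ K₂ → ∀ n : ℕ, n₀ ≤ n →
          ∃ μ' : Measure X, IsProbabilityMeasure μ' ∧
            Measure.map (seqComp S.T k n) μ =
              ENNReal.ofReal θ • S.m (k + n) + ENNReal.ofReal (1 - θ) • μ' ∧
            S.Regular K₁ (k + n) μ' ∧
            S.TailBound (k + n) μ' (S.hnk Ch k n)) := by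
  haveI : Nonempty X := S.nonemptyX
  obtain ⟨hK₁pos, hK₁₂⟩ := S.constants hK₂ hK₁
  have hK₂pos : 0 < K₂ := lt_trans hK₁pos hK₁₂
  set D := Metric.diam (univ : Set X) with hDdef
  have hD0 : 0 ≤ D := Metric.diam_nonneg
  constructor
  · -- part (a)
    intro k hk μ hμprob hμLL n
    constructor
    · -- Regular
      intro l hl
      rw [NUE.regular_decomp S hk μ n l hl]
      refine LL.finsetSum _ _ (fun j hj => ?_)
      have hjn : j ≤ n := Nat.lt_succ_iff.mp (Finset.mem_range.mp hj)
      have hγLL : LLBoundedBy (S.m (k + j)) (S.Y (k + j)) (NUE.gammaM S k μ j) K₂ := by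
        rcases Nat.eq_zero_or_pos j with h0 | h0
        · subst h0; rw [NUE.gammaM_zero]; exact hμLL
        · exact LL.mono (S.gammaM_ll hK₂ hK₁ hk μ hμLL j h0) hK₁₂.le
      have hmass : NUE.gammaM S k μ j Set.univ ≠ ⊤ :=
        ne_top_of_le_ne_top ENNReal.one_ne_top (S.gammaM_mass hk μ j)
      have hstep := S.step (κ := k + j) (by omega) hK₂pos.le hγLL hmass
        (l := n - j + l) (by omega)
      have he : k + j + (n - j + l) = k + n + l := by omega
      rw [he, ← hK₁] at hstep
      exact hstep
    · -- Tail
      intro l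
      exact S.tail_bound_a hK₂ hK₁ hk μ hμLL hCh n l
  · -- part (b)
    set ε : ℝ := δ₀ * Real.exp (-(K₂ * D)) / Real.exp (K₁ * D) with hε
    have hεpos : 0 < ε := by positivity
    set θ : ℝ := min (ε * (K₂ - K₁) / (K₂ * Real.exp (K₂ * D))) (1 / 2) with hθdef
    have hθpos : 0 < θ := lt_min
      (div_pos (mul_pos hεpos (sub_pos.mpr hK₁₂)) (mul_pos hK₂pos (Real.exp_pos _)))
      (by norm_num)
    have hθhalf : θ ≤ 1 / 2 := min_le_right _ _
    have hθε' : θ ≤ ε * (K₂ - K₁) / (K₂ * Real.exp (K₂ * D)) := min_le_left _ _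
    have hθε : θ ≤ ε := by
      refine hθε'.trans ?_
      rw [div_le_iff₀ (mul_pos hK₂pos (Real.exp_pos _))]
      nlinarith [mul_nonneg (mul_nonneg hεpos.le hK₂pos.le)
        (sub_nonneg.mpr (Real.one_le_exp (mul_nonneg hK₂pos.le hD0))),
        mul_nonneg hεpos.le hK₁pos.le]
    refine ⟨θ, ⟨hθpos, by linarith⟩, ?_⟩
    intro k hk μ hμprob hμLL n hn
    have hn1 : 1 ≤ n := le_trans hn₀ hn
    have hγLLn := S.gammaM_ll hK₂ hK₁ hk μ hμLL n hn1
    obtain ⟨ρt, hρt0, hρtm, hρteq, hρtll⟩ := hγLLn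
    haveI := S.mprob (k + n)
    haveI := S.mprob k
    have hYm := S.Ymeas (k + n)
    have hmY := S.mY (k + n) (by omega)
    have hmcompl := S.mYcompl (k := k + n) (by omega)
    -- map μ agrees with γ_n on Y (k+n)
    have hμY : Measure.map (seqComp S.T k n) μ (S.Y (k + n)) =
        NUE.gammaM S k μ n (S.Y (k + n)) := by
      rw [NUE.master S hk μ n, Measure.finset_sum_apply, Finset.sum_range_succ]
      have hzero : ∀ j ∈ Finset.range n, Measure.map (seqComp S.T (k + j) (n - j))
          ((NUE.gammaM S k μ j).restrict {x | n - j < S.tau (k + j) x}) (S.Y (k + n)) = 0 := by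
        intro j hj
        have hjn : j < n := Finset.mem_range.mp hj
        rw [Measure.map_apply (seqComp_measurable S.Tmeas _ _) hYm,
          Measure.restrict_apply (seqComp_measurable S.Tmeas _ _ hYm)]
        have hempty : (seqComp S.T (k + j) (n - j)) ⁻¹' (S.Y (k + n)) ∩
            {x : X | n - j < S.tau (k + j) x} = (∅ : Set X) := by
          rw [Set.eq_empty_iff_forall_notMem]
          rintro x ⟨hx1, hx2⟩
          have hnot := S.not_mem_Y_of_lt_tau (k := k + j) (s := n - j) (by omega) hx2
          have he : k + j + (n - j) = k + n := by omega
          rw [he] at hnot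
          exact hnot hx1
        rw [hempty, measure_empty]
      rw [Finset.sum_eq_zero hzero, zero_add]
      have h1 : {x : X | 0 < S.tau (k + n) x} = Set.univ := S.tauGe_zero (by omega)
      rw [Nat.sub_self, h1, Measure.restrict_univ]
      show Measure.map id _ _ = _
      rw [Measure.map_id]
    have hγcompl : NUE.gammaM S k μ n (S.Y (k + n))ᶜ = 0 := by
      rw [hρteq]; exact (withDensity_absolutelyContinuous _ _) hmcompl
    have hγuniv : NUE.gammaM S k μ n Set.univ = NUE.gammaM S k μ n (S.Y (k + n)) := by
      rw [← measure_add_measure_compl hYm, hγcompl, add_zero]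
    -- lower bound on the mass of γ_n
    have hγmass : ENNReal.ofReal (δ₀ * Real.exp (-(K₂ * D))) ≤
        NUE.gammaM S k μ n Set.univ := by
      rw [hγuniv, ← hμY, Measure.map_apply (seqComp_measurable S.Tmeas k n) hYm]
      obtain ⟨ρ0, hρ00, hρ0m, hρ0eq, hρ0ll⟩ := hμLL
      have hlower := ll_measure_lower (m := S.m k) (c := K₂) hK₂pos.le (S.Ymeas k)
        (S.mY k hk) (S.mYcompl hk) S.bounded ⟨ρ0, hρ00, hρ0m, hρ0eq, hρ0ll⟩
        (B := (seqComp S.T k n) ⁻¹' (S.Y (k + n)))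
        ((seqComp_measurable S.Tmeas k n) hYm)
      rw [measure_univ, one_mul] at hlower
      have hmap5 := h5 k hk n hn
      rw [Measure.map_apply (seqComp_measurable S.Tmeas k n) hYm] at hmap5
      calc ENNReal.ofReal (δ₀ * Real.exp (-(K₂ * D)))
          = ENNReal.ofReal δ₀ * ENNReal.ofReal (Real.exp (-(K₂ * D))) :=
            ENNReal.ofReal_mul hδ₀.le
        _ ≤ S.m k ((seqComp S.T k n) ⁻¹' (S.Y (k + n))) *
              ENNReal.ofReal (Real.exp (-(K₂ * D))) := mul_le_mul_left hmap5 _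
        _ = ENNReal.ofReal (Real.exp (-(K₂ * D))) *
              S.m k ((seqComp S.T k n) ⁻¹' (S.Y (k + n))) := mul_comm _ _
        _ ≤ μ ((seqComp S.T k n) ⁻¹' (S.Y (k + n))) := hlower
    -- pointwise lower bound for the density of γ_n
    have hρtlow : ∀ y ∈ S.Y (k + n), ε ≤ ρt y := by
      intro y hy
      have hlow := ll_pointwise_lower (c := K₁) hK₁pos.le hYm hmY hmcompl S.bounded
        hρt0 hρtm hρteq hρtll hy
      have h2 : ENNReal.ofReal (δ₀ * Real.exp (-(K₂ * D))) ≤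
          ENNReal.ofReal (ρt y * Real.exp (K₁ * D)) := by
        refine hγmass.trans (hlow.trans_eq ?_)
        rw [← ENNReal.ofReal_mul (hρt0 y)]
      have h3 : δ₀ * Real.exp (-(K₂ * D)) ≤ ρt y * Real.exp (K₁ * D) :=
        (ENNReal.ofReal_le_ofReal_iff (mul_nonneg (hρt0 y) (Real.exp_nonneg _))).mp h2
      rw [hε, div_le_iff₀ (Real.exp_pos _)]
      exact h3
    -- the shifted density
    set ρb : X → ℝ := fun x => max (ρt x - θ) 0 with hρb
    have hρb0 : ∀ x, 0 ≤ ρb x := fun x => le_max_right _ _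
    have hρbm : Measurable ρb := (hρtm.sub measurable_const).max measurable_const
    have hρbY : ∀ y ∈ S.Y (k + n), ρb y = ρt y - θ := fun y hy =>
      max_eq_left (by linarith [hρtlow y hy, hθε])
    have hρble : ∀ x, ρb x ≤ ρt x := fun x =>
      max_le (by linarith [hθpos]) (hρt0 x)
    have hρbll : ∀ y ∈ S.Y (k + n), ∀ y' ∈ S.Y (k + n),
        ρb y ≤ ρb y' * Real.exp (K₂ * dist y y') := by
      intro y hy y' hy'
      rw [hρbY y hy, hρbY y' hy']
      set d := dist y y' with hd
      have hd0 : 0 ≤ d := dist_nonneg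
      have hdD : d ≤ D := Metric.dist_le_diam_of_mem S.bounded (Set.mem_univ _) (Set.mem_univ _)
      have h1 : ρt y ≤ ρt y' * Real.exp (K₁ * d) := hρtll y hy y' hy'
      have hεy : ε ≤ ρt y' := hρtlow y' hy'
      have hkey : θ * (Real.exp (K₂ * d) - 1) ≤
          ρt y' * (Real.exp (K₂ * d) - Real.exp (K₁ * d)) := by
        have ha : Real.exp (K₂ * d) - 1 ≤ K₂ * d * Real.exp (K₂ * D) := by
          have h1x : 1 - Real.exp (-(K₂ * d)) ≤ K₂ * d := by
            nlinarith [Real.add_one_le_exp (-(K₂ * d))]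
          have h2x : Real.exp (K₂ * d) ≤ Real.exp (K₂ * D) :=
            Real.exp_le_exp.mpr (by nlinarith)
          have h3x : Real.exp (K₂ * d) * Real.exp (-(K₂ * d)) = 1 := by
            rw [← Real.exp_add]; norm_num
          nlinarith [mul_le_mul_of_nonneg_left h1x (Real.exp_nonneg (K₂ * d)),
            mul_le_mul_of_nonneg_right h2x (mul_nonneg hK₂pos.le hd0), h3x]
        have hb : (K₂ - K₁) * d ≤ Real.exp (K₂ * d) - Real.exp (K₁ * d) := by
          have h1x : Real.exp (K₁ * d) * Real.exp ((K₂ - K₁) * d) = Real.exp (K₂ * d) := by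
            rw [← Real.exp_add]; ring_nf
          have h2x : (K₂ - K₁) * d + 1 ≤ Real.exp ((K₂ - K₁) * d) := Real.add_one_le_exp _
          have h3x : 1 ≤ Real.exp (K₁ * d) := Real.one_le_exp (mul_nonneg hK₁pos.le hd0)
          nlinarith [mul_le_mul_of_nonneg_left h2x (Real.exp_pos (K₁ * d)).le, h1x,
            mul_nonneg (sub_nonneg.mpr h3x) (mul_nonneg (sub_nonneg.mpr hK₁₂.le) hd0)]
        have hθbound : θ * (K₂ * Real.exp (K₂ * D)) ≤ ε * (K₂ - K₁) :=
          (le_div_iff₀ (mul_pos hK₂pos (Real.exp_pos _))).mp hθε'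
        nlinarith [mul_le_mul_of_nonneg_left ha hθpos.le,
          mul_le_mul_of_nonneg_right hθbound hd0,
          mul_le_mul_of_nonneg_right hεy (mul_nonneg (sub_nonneg.mpr hK₁₂.le) hd0),
          mul_le_mul_of_nonneg_left hb (hρt0 y')]
      nlinarith [h1, hkey]
    -- decomposition
    set wd : Measure X := (S.m (k + n)).withDensity (fun x => ENNReal.ofReal (ρb x)) with hwd
    set mid : Measure X := ∑ j ∈ Finset.range n, Measure.map (seqComp S.T (k + j) (n - j))
      ((NUE.gammaM S k μ j).restrict {x | n - j < S.tau (k + j) x}) with hmid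
    set νb : Measure X := mid + wd with hνb
    have hγsplit : NUE.gammaM S k μ n = ENNReal.ofReal θ • S.m (k + n) + wd := by
      rw [hρteq, hwd]
      have hae : (fun x => ENNReal.ofReal (ρt x)) =ᵐ[S.m (k + n)]
          (fun x => ENNReal.ofReal θ + ENNReal.ofReal (ρb x)) := by
        have hsub : {x : X | ¬ (ENNReal.ofReal (ρt x) =
            ENNReal.ofReal θ + ENNReal.ofReal (ρb x))} ⊆ (S.Y (k + n))ᶜ := by
          intro x hx
          by_contra hxY
          rw [Set.notMem_compl_iff] at hxY
          apply hx
          rw [hρbY x hxY, ← ENNReal.ofReal_add hθpos.le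
            (by linarith [hρtlow x hxY, hθε])]
          congr 1
          ring
        exact measure_mono_null hsub hmcompl
      have hfun : (fun x => ENNReal.ofReal θ + ENNReal.ofReal (ρb x)) =
          (fun _ => ENNReal.ofReal θ) + (fun x => ENNReal.ofReal (ρb x)) := rfl
      rw [withDensity_congr_ae hae, hfun, withDensity_add_left measurable_const,
        withDensity_const]
    have hmain : Measure.map (seqComp S.T k n) μ = ENNReal.ofReal θ • S.m (k + n) + νb := by
      rw [NUE.master S hk μ n, Finset.sum_range_succ]
      have hlast : Measure.map (seqComp S.T (k + n) (n - n))
          ((NUE.gammaM S k μ n).restrict {x | n - n < S.tau (k + n) x}) =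
          NUE.gammaM S k μ n := by
        have h1 : {x : X | 0 < S.tau (k + n) x} = Set.univ := S.tauGe_zero (by omega)
        rw [Nat.sub_self, h1, Measure.restrict_univ]
        exact Measure.map_id
      rw [hlast, hγsplit, hνb, ← hmid]
      rw [← add_assoc, add_comm mid (ENNReal.ofReal θ • S.m (k + n)), add_assoc]
    set cθ : ℝ≥0∞ := ENNReal.ofReal (1 - θ) with hcθ
    have hcθ0 : cθ ≠ 0 := by
      rw [hcθ, ne_eq, ENNReal.ofReal_eq_zero, not_le]
      linarith
    have hcθtop : cθ ≠ ⊤ := ENNReal.ofReal_ne_top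
    have hcθ' : cθ = 1 - ENNReal.ofReal θ := by
      rw [hcθ, ENNReal.ofReal_sub _ hθpos.le, ENNReal.ofReal_one]
    have hνbuniv : νb Set.univ = cθ := by
      have h1 : Measure.map (seqComp S.T k n) μ Set.univ = 1 := by
        rw [Measure.map_apply (seqComp_measurable S.Tmeas k n) MeasurableSet.univ,
          Set.preimage_univ, measure_univ]
      rw [hmain, Measure.add_apply, Measure.smul_apply, smul_eq_mul, measure_univ,
        mul_one] at h1
      rw [add_comm] at h1
      have h2 : νb Set.univ = 1 - ENNReal.ofReal θ :=
        ENNReal.eq_sub_of_add_eq ENNReal.ofReal_ne_top h1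
      rw [h2, hcθ']
    set μ' : Measure X := cθ⁻¹ • νb with hμ'def
    have hwdmass : wd Set.univ ≠ ⊤ := by
      refine ne_top_of_le_ne_top ENNReal.one_ne_top ?_
      refine le_trans ?_ (S.gammaM_mass hk μ n)
      rw [hγsplit, Measure.add_apply]
      exact le_add_self
    refine ⟨μ', ?_, ?_, ?_, ?_⟩
    · exact ⟨by rw [hμ'def, Measure.smul_apply, smul_eq_mul, hνbuniv,
        ENNReal.inv_mul_cancel hcθ0 hcθtop]⟩
    · rw [hμ'def, smul_smul, ENNReal.mul_inv_cancel hcθ0 hcθtop, one_smul]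
      exact hmain
    · -- Regular μ'
      intro l hl
      rw [hμ'def, Measure.restrict_smul, Measure.map_smul]
      refine LL.smul ?_ _ (by simp [hcθ0])
      rw [hνb, Measure.restrict_add, Measure.map_add _ _ (seqComp_measurable S.Tmeas _ _)]
      refine LL.add ?_ ?_
      · rw [hmid, NUE.restrict_finsetSum, NUE.map_finsetSum (seqComp_measurable S.Tmeas _ _)]
        refine LL.finsetSum _ _ (fun j hj => ?_)
        have hjn : j ≤ n := le_of_lt (Finset.mem_range.mp hj)
        rw [NUE.term_push S hk μ hjn hl]
        have hγLL : LLBoundedBy (S.m (k + j)) (S.Y (k + j)) (NUE.gammaM S k μ j) K₂ := by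
          rcases Nat.eq_zero_or_pos j with h0 | h0
          · subst h0; rw [NUE.gammaM_zero]; exact hμLL
          · exact LL.mono (S.gammaM_ll hK₂ hK₁ hk μ hμLL j h0) hK₁₂.le
        have hmass : NUE.gammaM S k μ j Set.univ ≠ ⊤ :=
          ne_top_of_le_ne_top ENNReal.one_ne_top (S.gammaM_mass hk μ j)
        have hstep := S.step (κ := k + j) (by omega) hK₂pos.le hγLL hmass
          (l := n - j + l) (by omega)
        have he : k + j + (n - j + l) = k + n + l := by omega
        rw [he, ← hK₁] at hstep
        exact hstep
      · have hwdLL : LLBoundedBy (S.m (k + n)) (S.Y (k + n)) wd K₂ :=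
          ⟨ρb, hρb0, hρbm, hwd, hρbll⟩
        have hstep := S.step (κ := k + n) (by omega) hK₂pos.le hwdLL hwdmass hl
        rw [← hK₁] at hstep
        exact hstep
    · -- Tail μ'
      intro l
      have hle : νb {x | l ≤ S.tau (k + n) x} ≤
          Measure.map (seqComp S.T k n) μ {x | l ≤ S.tau (k + n) x} := by
        rw [hmain, Measure.add_apply]
        exact le_add_self
      have htail := S.tail_bound_a hK₂ hK₁ hk μ hμLL hCh n l
      have hcinv2 : cθ⁻¹ ≤ ENNReal.ofReal 2 := by
        have h1 : (ENNReal.ofReal (1 / 2 : ℝ))⁻¹ = ENNReal.ofReal 2 := by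
          rw [show (1 / 2 : ℝ) = 2⁻¹ by norm_num,
            ENNReal.ofReal_inv_of_pos (by norm_num), inv_inv]
        rw [← h1]
        exact ENNReal.inv_le_inv' (ENNReal.ofReal_le_ofReal (by linarith))
      rw [hμ'def, Measure.smul_apply, smul_eq_mul]
      calc cθ⁻¹ * νb {x | l ≤ S.tau (k + n) x}
          ≤ cθ⁻¹ * ENNReal.ofReal (1 / 2 * S.hnk Ch k n l) :=
            mul_le_mul_right (hle.trans htail) _
        _ ≤ ENNReal.ofReal 2 * ENNReal.ofReal (1 / 2 * S.hnk Ch k n l) :=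
            mul_le_mul_left hcinv2 _
        _ = ENNReal.ofReal (2 * (1 / 2 * S.hnk Ch k n l)) :=
            (ENNReal.ofReal_mul (by norm_num)).symm
        _ = ENNReal.ofReal (S.hnk Ch k n l) := by
            congr 1
            ring

end Final

end
end
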